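/- arXiv:2008.00938 — 4 statements merged into one kernel-verified Lean document; each statement's English description precedes it below -/
import Mathlib

section
/- (Optimal feature rescaling for the minimum-norm interpolator) Let Φ ∈ ℝ^{n×P} have SVD Φ = Σ_{j=1}^n √λ_j u_j v_jᵀ with all λ_j > 0, and let w* = Φᵀ(ΦΦᵀ)⁻¹y = Σ_j (u_jᵀy/√λ_j) v_j be the minimum ℓ₂-norm interpolator of labels y ∈ ℝⁿ (assume u_jᵀy ≠ 0 for all j). For rescaling matrices A_ν = Σ_j √ν_j v_j v_jᵀ + Id on span{v_j}⊥ with ν_j > 0, the function ν ↦ ‖w*‖²_{A_ν} · Tr K_{A_ν} = (Σ_j (ν_j/λ_j)(u_jᵀy)²)·(Σ_j λ_j/ν_j) has critical points exactly when ν_j = κ·λ_j/|u_jᵀy| for some constant κ > 0 independent of j. -/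
/-!
With `a j = (u j ⬝ᵥ y) ^ 2 / lam j` and `r j = lam j / |u j ⬝ᵥ y|` one has `lam j = a j * r j ^ 2`,
and the function is `F ν = S ν * T ν` with `S ν = ∑ a j * ν j`, `T ν = ∑ lam j / ν j`. Its partial
derivatives are `T * a j - S * lam j / ν j ^ 2`, so at a critical point `ν j ^ 2 = (S / T) * r j ^ 2`
for every `j`, i.e. `ν = √(S / T) • r`. Conversely, for `ν = κ • r` both `S` and `κ ^ 2 * T` equal
`κ * ∑ a j * r j`, which makes every partial derivative vanish.
-/

theorem sum_smul_proj_eq_zero_iff {𝕜 ι : Type*} [NontriviallyNormedField 𝕜] [Fintype ι]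
    [DecidableEq ι] (g : ι → 𝕜) :
    ∑ j, g j • (ContinuousLinearMap.proj j : (ι → 𝕜) →L[𝕜] 𝕜) = 0 ↔ ∀ j, g j = 0 := by
  refine ⟨fun h j => ?_, fun h => ContinuousLinearMap.ext fun x => by simp [h]⟩
  simpa [Pi.single_apply] using congr($h (Pi.single j 1))

section

variable {ι : Type*} [Fintype ι]

theorem hasFDerivAt_sum_mul_mul_sum_div (a b ν : ι → ℝ) (hν : ∀ j, ν j ≠ 0) :
    HasFDerivAt (fun x => (∑ i, a i * x i) * ∑ i, b i / x i)
      (∑ j, ((∑ i, b i / ν i) * a j - (∑ i, a i * ν i) * b j / ν j ^ 2) •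
        (ContinuousLinearMap.proj j : (ι → ℝ) →L[ℝ] ℝ)) ν := by
  have hlin : HasFDerivAt (fun x : ι → ℝ => ∑ i, a i * x i)
      (∑ j, a j • (ContinuousLinearMap.proj j : (ι → ℝ) →L[ℝ] ℝ)) ν :=
    HasFDerivAt.fun_sum fun j _ =>
      (ContinuousLinearMap.proj j : (ι → ℝ) →L[ℝ] ℝ).hasFDerivAt.const_mul (a j)
  have hinv : HasFDerivAt (fun x : ι → ℝ => ∑ i, b i / x i)
      (∑ j, (-(b j / ν j ^ 2)) • (ContinuousLinearMap.proj j : (ι → ℝ) →L[ℝ] ℝ)) ν := by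
    refine HasFDerivAt.fun_sum fun j _ => ?_
    refine (((hasDerivAt_inv (hν j)).comp_hasFDerivAt ν
      (ContinuousLinearMap.proj j : (ι → ℝ) →L[ℝ] ℝ).hasFDerivAt).const_mul (b j)).congr_fderiv ?_
    rw [smul_smul]
    congr 1
    ring
  refine (hlin.mul hinv).congr_fderiv ?_
  ext x
  simp only [_root_.add_apply, _root_.smul_apply, _root_.sum_apply,
    ContinuousLinearMap.proj_apply, smul_eq_mul, Finset.mul_sum, ← Finset.sum_add_distrib]
  exact Finset.sum_congr rfl fun i _ => by ring

theorem forall_sum_div_mul_sub_eq_zero_iff [Nonempty ι] (a b r ν : ι → ℝ) (ha : ∀ j, 0 < a j)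
    (hr : ∀ j, 0 < r j) (hb : ∀ j, b j = a j * r j ^ 2) (hν : ∀ j, 0 < ν j) :
    (∀ j, (∑ i, b i / ν i) * a j - (∑ i, a i * ν i) * b j / ν j ^ 2 = 0) ↔
      ∃ κ > 0, ∀ j, ν j = κ * r j := by
  set S := ∑ i, a i * ν i
  set T := ∑ i, b i / ν i
  constructor
  · intro h
    have hS : 0 < S := Finset.sum_pos (fun i _ => mul_pos (ha i) (hν i)) Finset.univ_nonempty
    have hT : 0 < T := Finset.sum_pos (fun i _ => div_pos
      (by rw [hb]; exact mul_pos (ha i) (pow_pos (hr i) 2)) (hν i)) Finset.univ_nonempty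
    refine ⟨√(S / T), by positivity, fun j => ?_⟩
    have hsq : ν j ^ 2 = (√(S / T) * r j) ^ 2 := by
      rw [mul_pow, Real.sq_sqrt (by positivity)]
      have hj := h j
      rw [hb, sub_eq_zero, eq_div_iff (by have := hν j; positivity)] at hj
      rw [div_mul_eq_mul_div, eq_div_iff hT.ne']
      apply mul_left_cancel₀ (ha j).ne'
      linear_combination hj
    exact (pow_left_inj₀ (hν j).le (by have := hr j; positivity) two_ne_zero).mp hsq
  · rintro ⟨κ, hκ, hνκ⟩ j
    have hS : S = κ * ∑ i, a i * r i := by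
      simp only [S, hνκ, Finset.mul_sum]
      exact Finset.sum_congr rfl fun i _ => by ring
    have hT : T = κ⁻¹ * ∑ i, a i * r i := by
      simp only [T, hνκ, hb, Finset.mul_sum]
      exact Finset.sum_congr rfl fun i _ => by have := (hr i).ne'; field_simp
    rw [hS, hT, hνκ, hb]
    have := (hr j).ne'
    field_simp
    ring

theorem fderiv_sum_mul_mul_sum_div_eq_zero_iff [Nonempty ι] (a b r ν : ι → ℝ)
    (ha : ∀ j, 0 < a j) (hr : ∀ j, 0 < r j) (hb : ∀ j, b j = a j * r j ^ 2)
    (hν : ∀ j, 0 < ν j) :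
    fderiv ℝ (fun x => (∑ i, a i * x i) * ∑ i, b i / x i) ν = 0 ↔
      ∃ κ > 0, ∀ j, ν j = κ * r j := by
  classical
  rw [(hasFDerivAt_sum_mul_mul_sum_div a b ν fun j => (hν j).ne').fderiv,
    sum_smul_proj_eq_zero_iff]
  exact forall_sum_div_mul_sub_eq_zero_iff a b r ν ha hr hb hν

end

/-- Optimal feature rescaling for the minimum-norm interpolator: the
function `ν ↦ ‖w*‖²_{A_ν} · Tr K_{A_ν} = (Σ_j (ν_j/λ_j)(u_jᵀy)²)·(Σ_j λ_j/ν_j)` has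
a critical point at `ν` (with all `ν_j > 0`) iff `ν_j = κ·λ_j/|u_jᵀy|` for some
constant `κ > 0` independent of `j`. -/
theorem optimal_rescaling_min_norm_interpolator
    {n : ℕ} (hn : 0 < n)
    (lam : Fin n → ℝ) (hlam : ∀ j, 0 < lam j)
    (u : Fin n → Fin n → ℝ) (y : Fin n → ℝ)
    (hy : ∀ j, u j ⬝ᵥ y ≠ 0)
    (F : (Fin n → ℝ) → ℝ)
    (hF : F = fun ν =>
      (∑ j, (ν j / lam j) * (u j ⬝ᵥ y) ^ 2) * (∑ j, lam j / ν j)) :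
    ∀ ν : Fin n → ℝ, (∀ j, 0 < ν j) →
      (fderiv ℝ F ν = 0 ↔ ∃ κ > 0, ∀ j, ν j = κ * lam j / |u j ⬝ᵥ y|) := by
  intro ν hν
  have : Nonempty (Fin n) := ⟨⟨0, hn⟩⟩
  have hF' : F = fun x => (∑ i, (u i ⬝ᵥ y) ^ 2 / lam i * x i) * ∑ i, lam i / x i := by
    subst hF
    funext x
    congr 1
    exact Finset.sum_congr rfl fun i _ => by ring
  have hlam_eq : ∀ j, lam j = (u j ⬝ᵥ y) ^ 2 / lam j * (lam j / |u j ⬝ᵥ y|) ^ 2 := fun j => by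
    have := hy j
    have := (hlam j).ne'
    rw [div_pow, sq_abs]
    field_simp
  simp_rw [hF', mul_div_assoc]
  exact fderiv_sum_mul_mul_sum_div_eq_zero_iff _ _ _ ν
    (fun j => div_pos (pow_two_pos_of_ne_zero (hy j)) (hlam j))
    (fun j => div_pos (hlam j) (abs_pos.2 (hy j))) hlam_eq hν
end

section
/- (SuperNat optimal rescaling) Let Φ_t ∈ ℝ^{n×P} have SVD Φ_t = Σ_{j=1}^n √λ_{jt} u_j v_jᵀ with λ_{jt} > 0, let L: ℝⁿ → ℝ be differentiable with gradient ∇_f L at the current outputs, let δw = −η Φ_tᵀ ∇_f L, and suppose u_jᵀ∇_f L ≠ 0 for all j. For matrices A_ν = Σ_j √ν_j v_j v_jᵀ + Id on span{v}⊥ (ν_j > 0), the critical points of ν ↦ ‖δw‖²_{A_ν} · ‖A_ν⁻¹Φ_tᵀ‖_F² are exactly ν_j = κ / |u_jᵀ∇_f L| for some constant κ > 0 independent of j. -/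
/-!
Write `g_j = u_jᵀ∇_f L`, `A(ν) = Σ_j λ_j g_j² ν_j` and `B(ν) = Σ_j λ_j / ν_j`, so that the
objective is `η² A B`. Its `k`-th partial derivative is `η² (λ_k g_k² B - A λ_k / ν_k²)`, which
vanishes iff `(ν_k |g_k|)² = A / B`. Hence at a critical point every `ν_k |g_k|` equals
`κ = √(A / B)`. Conversely, if `ν_k |g_k| = κ` for all `k`, then with `S = Σ_j λ_j |g_j|` we get
`A = κ S` and `B = S / κ`, so `A / B = κ²` and all partial derivatives vanish.
-/

open Matrix

section
variable {ι : Type*} [Fintype ι]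

theorem hasFDerivAt_sum_mul_apply (c ν : ι → ℝ) :
    HasFDerivAt (fun x : ι → ℝ => ∑ j, c j * x j)
      (∑ j, c j • ContinuousLinearMap.proj (R := ℝ) (φ := fun _ : ι => ℝ) j) ν :=
  HasFDerivAt.fun_sum fun j _ => (hasFDerivAt_apply j ν).const_mul (c j)

theorem hasFDerivAt_sum_div_apply {ν : ι → ℝ} (a : ι → ℝ) (hν : ∀ j, ν j ≠ 0) :
    HasFDerivAt (fun x : ι → ℝ => ∑ j, a j / x j)
      (∑ j, (-(a j / ν j ^ 2)) • ContinuousLinearMap.proj (R := ℝ) (φ := fun _ : ι => ℝ) j) ν := by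
  refine HasFDerivAt.fun_sum fun j _ => ?_
  have := ((hasDerivAt_inv (hν j)).comp_hasFDerivAt ν
    (hasFDerivAt_apply (𝕜 := ℝ) j ν)).const_mul (a j)
  simpa only [div_eq_mul_inv, smul_smul, mul_neg, Function.comp_def] using this

theorem hasFDerivAt_sum_mul_apply_mul_sum_div_apply {ν : ι → ℝ} (c a : ι → ℝ)
    (hν : ∀ j, ν j ≠ 0) :
    HasFDerivAt (fun x : ι → ℝ => (∑ j, c j * x j) * ∑ j, a j / x j)
      (∑ j, (c j * ∑ i, a i / ν i - (∑ i, c i * ν i) * (a j / ν j ^ 2)) •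
        ContinuousLinearMap.proj (R := ℝ) (φ := fun _ : ι => ℝ) j) ν := by
  refine ((hasFDerivAt_sum_mul_apply c ν).fun_mul
    (hasFDerivAt_sum_div_apply a hν)).congr_fderiv ?_
  rw [Finset.smul_sum, Finset.smul_sum, ← Finset.sum_add_distrib]
  exact Finset.sum_congr rfl fun j _ => by module

theorem sum_smul_proj_eq_zero_iff_s13 (d : ι → ℝ) :
    (∑ j, d j • ContinuousLinearMap.proj (R := ℝ) (φ := fun _ : ι => ℝ) j) = 0 ↔ ∀ j, d j = 0 := by
  classical
  refine ⟨fun h k => ?_, fun h => by simp [h]⟩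
  simpa [Pi.single_apply] using congrArg (fun L => L (Pi.single k 1)) h

end

theorem mul_sq_mul_sub_mul_div_sq_eq_zero_iff {a g ν A B : ℝ} (ha : a ≠ 0) (hν : 0 < ν)
    (hA : 0 ≤ A) (hB : 0 < B) :
    a * g ^ 2 * B - A * (a / ν ^ 2) = 0 ↔ ν * |g| = √(A / B) := by
  rw [@eq_comm _ (ν * |g|), Real.sqrt_eq_iff_eq_sq (div_nonneg hA hB.le) (by positivity),
    mul_pow, sq_abs, div_eq_iff hB.ne', sub_eq_zero]
  field_simp
  constructor <;> intro h <;> linarith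

section
variable {ι : Type*} [Fintype ι] [Nonempty ι]

theorem sum_mul_sq_mul_div_sum_div_eq_sq {a g ν : ι → ℝ} {κ : ℝ} (ha : ∀ j, 0 < a j)
    (hg : ∀ j, g j ≠ 0) (hκ : 0 < κ) (hνg : ∀ j, ν j * |g j| = κ) :
    (∑ j, a j * g j ^ 2 * ν j) / (∑ j, a j / ν j) = κ ^ 2 := by
  have hS : 0 < ∑ j, a j * |g j| :=
    Finset.sum_pos (fun j _ => mul_pos (ha j) (abs_pos.2 (hg j))) Finset.univ_nonempty
  have hnum : ∑ j, a j * g j ^ 2 * ν j = κ * ∑ j, a j * |g j| := by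
    rw [Finset.mul_sum]
    refine Finset.sum_congr rfl fun j _ => ?_
    rw [← sq_abs, ← hνg j]
    ring
  have hden : ∑ j, a j / ν j = (∑ j, a j * |g j|) / κ := by
    rw [Finset.sum_div]
    refine Finset.sum_congr rfl fun j _ => ?_
    rw [← hνg j, mul_div_mul_right _ _ (abs_pos.2 (hg j)).ne']
  rw [hnum, hden]
  field_simp

theorem forall_mul_sq_mul_sub_mul_div_sq_eq_zero_iff {a g ν : ι → ℝ}
    (ha : ∀ j, 0 < a j) (hg : ∀ j, g j ≠ 0) (hν : ∀ j, 0 < ν j) :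
    (∀ k, a k * g k ^ 2 * (∑ j, a j / ν j) - (∑ j, a j * g j ^ 2 * ν j) * (a k / ν k ^ 2) = 0) ↔
      ∃ κ > 0, ∀ k, ν k = κ / |g k| := by
  have hA : 0 < ∑ j, a j * g j ^ 2 * ν j := Finset.sum_pos
    (fun j _ => by have := ha j; have := hg j; have := hν j; positivity) Finset.univ_nonempty
  have hB : 0 < ∑ j, a j / ν j :=
    Finset.sum_pos (fun j _ => div_pos (ha j) (hν j)) Finset.univ_nonempty
  have hdiv (κ : ℝ) (k : ι) : ν k = κ / |g k| ↔ ν k * |g k| = κ :=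
    eq_div_iff (abs_pos.2 (hg k)).ne'
  simp only [mul_sq_mul_sub_mul_div_sq_eq_zero_iff (ha _).ne' (hν _) hA.le hB, hdiv]
  refine ⟨fun h => ⟨_, Real.sqrt_pos.2 (div_pos hA hB), h⟩, fun ⟨κ, hκ, h⟩ k => ?_⟩
  rw [sum_mul_sq_mul_div_sum_div_eq_sq ha hg hκ h, Real.sqrt_sq hκ.le, h k]

end

/-- SuperNat optimal rescaling: with
`‖δw‖²_{A_ν} = η² Σ_j (ν_j λ_{jt})(u_jᵀ∇_f L)²` and
`‖A_ν⁻¹Φ_tᵀ‖_F² = Σ_j λ_{jt}/ν_j`, the critical points of their product over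
`ν` with all `ν_j > 0` are exactly `ν_j = κ/|u_jᵀ∇_f L|` for some constant
`κ > 0` independent of `j`. -/
theorem supernat_optimal_rescaling
    {n : ℕ} (hn : 0 < n)
    (lam : Fin n → ℝ) (hlam : ∀ j, 0 < lam j)
    (u : Fin n → Fin n → ℝ) (gradL : Fin n → ℝ)
    (hgrad : ∀ j, u j ⬝ᵥ gradL ≠ 0)
    (η : ℝ) (hη : 0 < η)
    (F : (Fin n → ℝ) → ℝ)
    (hF : F = fun ν =>
      (η ^ 2 * ∑ j, (ν j * lam j) * (u j ⬝ᵥ gradL) ^ 2) * (∑ j, lam j / ν j)) :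
    ∀ ν : Fin n → ℝ, (∀ j, 0 < ν j) →
      (fderiv ℝ F ν = 0 ↔ ∃ κ > 0, ∀ j, ν j = κ / |u j ⬝ᵥ gradL|) := by
  intro ν hν
  have : Nonempty (Fin n) := ⟨⟨0, hn⟩⟩
  have hF' : F = fun x => η ^ 2 *
      ((∑ j, lam j * (u j ⬝ᵥ gradL) ^ 2 * x j) * ∑ j, lam j / x j) := by
    subst hF
    funext x
    rw [← mul_assoc]
    congr 2
    exact Finset.sum_congr rfl fun j _ => by ring
  rw [hF', ((hasFDerivAt_sum_mul_apply_mul_sum_div_apply _ lam fun j => (hν j).ne').const_mul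
    (η ^ 2)).fderiv, smul_eq_zero_iff_right (by positivity), sum_smul_proj_eq_zero_iff_s13]
  exact forall_mul_sq_mul_sub_mul_div_sq_eq_zero_iff hlam hgrad hν
end

section
/- (Margin loss complexity bound for multiclass linear models) Let Φ: X × {1,...,c} → ℝ^P be a joint feature map, A invertible, and F_M = { (x,y) ↦ ⟨w, Φ(x)[y]⟩ : ‖w‖_A ≤ M }. For the margin loss ℓ_γ with ramp function φ_γ composed with the multiclass margin μ(f(x), y) = f(x)[y] − max_{y'≠y} f(x)[y'], the empirical Rademacher complexity of the loss class satisfies R̂_S(ℓ_γ(F_M, ·)) ≤ (c^{3/2} M / (γ n)) · √(Tr K_A), where K_A is the nc × nc kernel matrix of the rescaled features A⁻¹Φ(x_i)[y]. -/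
open Matrix

set_option linter.unusedSectionVars false
set_option maxHeartbeats 1000000

open Matrix Finset

namespace RadAux

variable {ι : Type*} {n : ℕ}

/-- sign of a boolean as a real number -/
noncomputable def sgn (b : Bool) : ℝ := if b then 1 else -1

lemma abs_sgn (b : Bool) : |sgn b| = 1 := by cases b <;> simp [sgn]

lemma sgn_not (b : Bool) : sgn (!b) = -sgn b := by cases b <;> simp [sgn]

/-- boundedness of a family -/
def Bdd (F : Fin n → ι → ℝ) : Prop := ∀ i, ∃ C, ∀ t, |F i t| ≤ C

/-- unnormalized empirical Rademacher sum -/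
noncomputable def Rad (F : Fin n → ι → ℝ) : ℝ :=
  ∑ σ : Fin n → Bool, ⨆ t : ι, ∑ i, sgn (σ i) * F i t

lemma Bdd.bdd_sum {F : Fin n → ι → ℝ} (hF : Bdd F) (σ : Fin n → Bool) :
    BddAbove (Set.range fun t => ∑ i, sgn (σ i) * F i t) := by
  choose C hC using hF
  refine ⟨∑ i, C i, ?_⟩
  rintro x ⟨t, rfl⟩
  refine Finset.sum_le_sum fun i _ => ?_
  calc sgn (σ i) * F i t ≤ |sgn (σ i) * F i t| := le_abs_self _
    _ = |F i t| := by rw [abs_mul, abs_sgn, one_mul]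
    _ ≤ C i := hC i t

lemma Bdd.neg {F : Fin n → ι → ℝ} (hF : Bdd F) : Bdd (fun i t => -F i t) := by
  intro i; obtain ⟨C, hC⟩ := hF i; exact ⟨C, fun t => by rw [abs_neg]; exact hC t⟩

lemma Bdd.add {F G : Fin n → ι → ℝ} (hF : Bdd F) (hG : Bdd G) :
    Bdd (fun i t => F i t + G i t) := by
  intro i; obtain ⟨C, hC⟩ := hF i; obtain ⟨D, hD⟩ := hG i
  exact ⟨C + D, fun t => (abs_add_le _ _).trans (add_le_add (hC t) (hD t))⟩

lemma Bdd.smul {F : Fin n → ι → ℝ} (hF : Bdd F) (a : ℝ) :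
    Bdd (fun i t => a * F i t) := by
  intro i; obtain ⟨C, hC⟩ := hF i
  exact ⟨|a| * C, fun t => by
    rw [abs_mul]
    exact mul_le_mul_of_nonneg_left (hC t) (abs_nonneg a)⟩

lemma Bdd.comp {F : Fin n → ι → ℝ} (hF : Bdd F) (φ : Fin n → ℝ → ℝ)
    (hφ : ∀ i x y, |φ i x - φ i y| ≤ |x - y|) :
    Bdd (fun i t => φ i (F i t)) := by
  intro i; obtain ⟨C, hC⟩ := hF i
  refine ⟨C + |φ i 0|, fun t => ?_⟩
  have h1 := hφ i (F i t) 0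
  have h2 : |φ i (F i t)| - |φ i 0| ≤ |φ i (F i t) - φ i 0| := abs_sub_abs_le_abs_sub _ _
  have h3 : |F i t - 0| = |F i t| := by rw [sub_zero]
  have := hC t
  linarith

lemma Bdd.max' {F G : Fin n → ι → ℝ} (hF : Bdd F) (hG : Bdd G) :
    Bdd (fun i t => max (F i t) (G i t)) := by
  intro i; obtain ⟨C, hC⟩ := hF i; obtain ⟨D, hD⟩ := hG i
  refine ⟨max C D, fun t => ?_⟩
  have hC' := abs_le.1 (hC t); have hD' := abs_le.1 (hD t)
  rw [abs_le]
  constructor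
  · calc -max C D ≤ -C := by simp
      _ ≤ F i t := hC'.1
      _ ≤ max (F i t) (G i t) := le_max_left _ _
  · exact max_le_max hC'.2 hD'.2

variable [Nonempty ι]

lemma Rad_add_le {F G : Fin n → ι → ℝ} (hF : Bdd F) (hG : Bdd G) :
    Rad (fun i t => F i t + G i t) ≤ Rad F + Rad G := by
  rw [Rad, Rad, Rad, ← Finset.sum_add_distrib]
  refine Finset.sum_le_sum fun σ _ => ?_
  refine ciSup_le fun t => ?_
  have h1 := le_ciSup (hF.bdd_sum σ) t
  have h2 := le_ciSup (hG.bdd_sum σ) t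
  calc ∑ i, sgn (σ i) * (F i t + G i t)
      = (∑ i, sgn (σ i) * F i t) + ∑ i, sgn (σ i) * G i t := by
        rw [← Finset.sum_add_distrib]; exact Finset.sum_congr rfl fun i _ => by ring
    _ ≤ _ := add_le_add h1 h2

lemma Rad_neg (F : Fin n → ι → ℝ) : Rad (fun i t => -F i t) = Rad F := by
  rw [Rad, Rad]
  refine Fintype.sum_bijective (fun σ : Fin n → Bool => fun i => !σ i)
    ?_ _ _ fun σ => ?_
  · exact Function.Involutive.bijective fun σ => by funext i; simp
  · refine iSup_congr fun t => Finset.sum_congr rfl fun i _ => ?_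
    rw [sgn_not]; ring

lemma Rad_smul {F : Fin n → ι → ℝ} {a : ℝ} (ha : 0 ≤ a) :
    Rad (fun i t => a * F i t) = a * Rad F := by
  rw [Rad, Rad, Finset.mul_sum]
  refine Finset.sum_congr rfl fun σ _ => ?_
  rw [Real.mul_iSup_of_nonneg ha]
  refine iSup_congr fun t => ?_
  rw [Finset.mul_sum]
  exact Finset.sum_congr rfl fun i _ => by ring





variable {ι : Type*} [Nonempty ι]

/-- key pairing inequality for the contraction lemma -/
lemma pair_ineq (R g : ι → ℝ) (φ : ℝ → ℝ) (hφ : ∀ x y, |φ x - φ y| ≤ |x - y|)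
    (s₀ : ℝ) (hs : |s₀| = 1)
    (hb1 : BddAbove (Set.range fun t => s₀ * g t + R t))
    (hb2 : BddAbove (Set.range fun t => -s₀ * g t + R t)) :
    (⨆ t, s₀ * φ (g t) + R t) + (⨆ t, -s₀ * φ (g t) + R t) ≤
      (⨆ t, s₀ * g t + R t) + (⨆ t, -s₀ * g t + R t) := by
  set C := (⨆ t, s₀ * g t + R t) + (⨆ t, -s₀ * g t + R t) with hC
  have key : ∀ t t', (s₀ * φ (g t) + R t) + (-s₀ * φ (g t') + R t') ≤ C := by
    intro t t'
    have h1 : s₀ * φ (g t) - s₀ * φ (g t') ≤ |g t - g t'| := by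
      calc s₀ * φ (g t) - s₀ * φ (g t') = s₀ * (φ (g t) - φ (g t')) := by ring
        _ ≤ |s₀ * (φ (g t) - φ (g t'))| := le_abs_self _
        _ = |φ (g t) - φ (g t')| := by rw [abs_mul, hs, one_mul]
        _ ≤ |g t - g t'| := hφ _ _
    rcases le_total 0 (s₀ * (g t - g t')) with h | h
    · have h2 : |g t - g t'| = s₀ * g t - s₀ * g t' := by
        have : |g t - g t'| = |s₀ * (g t - g t')| := by rw [abs_mul, hs, one_mul]
        rw [this, abs_of_nonneg h]; ring
      have h3 := le_ciSup hb1 t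
      have h4 := le_ciSup hb2 t'
      rw [hC]; linarith
    · have h2 : |g t - g t'| = -s₀ * g t + s₀ * g t' := by
        have : |g t - g t'| = |s₀ * (g t - g t')| := by rw [abs_mul, hs, one_mul]
        rw [this, abs_of_nonpos h]; ring
      have h3 := le_ciSup hb2 t
      have h4 := le_ciSup hb1 t'
      rw [hC]; linarith
  have h5 : ∀ t, (⨆ t', -s₀ * φ (g t') + R t') ≤ C - (s₀ * φ (g t) + R t) := by
    intro t
    refine ciSup_le fun t' => ?_
    linarith [key t t']
  have h6 : (⨆ t, s₀ * φ (g t) + R t) ≤ C - ⨆ t', -s₀ * φ (g t') + R t' := by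
    refine ciSup_le fun t => ?_
    linarith [h5 t]
  linarith



lemma Rad_contract_one {n : ℕ} {F : Fin n → ι → ℝ} (hF : Bdd F) (a : Fin n) (ψ : ℝ → ℝ)
    (hψ : ∀ x y, |ψ x - ψ y| ≤ |x - y|) :
    Rad (fun i t => if i = a then ψ (F i t) else F i t) ≤ Rad F := by
  classical
  set e : (Fin n → Bool) → (Fin n → Bool) := fun σ => Function.update σ a (!σ a) with he
  have hinv : Function.Involutive e := by
    intro σ; funext i
    by_cases h : i = a
    · subst h; simp [e]
    · simp [e, Function.update_of_ne h]
  have hsum : ∀ W : (Fin n → Bool) → ℝ, ∑ σ, W σ = (∑ σ, (W σ + W (e σ))) / 2 := by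
    intro W
    have h1 : ∑ σ, W (e σ) = ∑ σ, W σ :=
      Fintype.sum_bijective e hinv.bijective _ _ fun σ => rfl
    rw [Finset.sum_add_distrib, h1]; ring
  rw [Rad, Rad]
  conv_lhs => rw [hsum]
  conv_rhs => rw [hsum]
  rw [div_le_div_iff_of_pos_right (by norm_num : (0:ℝ) < 2)]
  refine Finset.sum_le_sum fun σ _ => ?_
  -- decompose the sums
  set g : ι → ℝ := F a with hg
  set R : ι → ℝ := fun t => ∑ i ∈ univ.erase a, sgn (σ i) * F i t with hR
  have hea : e σ a = !σ a := by simp [e]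
  have hei : ∀ i, i ≠ a → e σ i = σ i := fun i h => Function.update_of_ne h _ _
  have hsplit : ∀ (τ : Fin n → Bool) (H : Fin n → ι → ℝ) (t : ι),
      ∑ i, sgn (τ i) * H i t = sgn (τ a) * H a t + ∑ i ∈ univ.erase a, sgn (τ i) * H i t :=
    fun τ H t => (Finset.add_sum_erase _ _ (mem_univ a)).symm
  have hRe : ∀ t, ∑ i ∈ univ.erase a, sgn (e σ i) * F i t = R t := by
    intro t
    exact Finset.sum_congr rfl fun i hi => by rw [hei i (Finset.ne_of_mem_erase hi)]
  have hG : ∀ t, ∑ i ∈ univ.erase a, sgn (σ i) * (if i = a then ψ (F i t) else F i t) = R t := by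
    intro t
    exact Finset.sum_congr rfl fun i hi => by rw [if_neg (Finset.ne_of_mem_erase hi)]
  have hGe : ∀ t, ∑ i ∈ univ.erase a, sgn (e σ i) * (if i = a then ψ (F i t) else F i t) = R t := by
    intro t
    refine Finset.sum_congr rfl fun i hi => ?_
    rw [hei i (Finset.ne_of_mem_erase hi), if_neg (Finset.ne_of_mem_erase hi)]
  -- rewrite the four iSup's
  have e1 : (⨆ t, ∑ i, sgn (σ i) * (if i = a then ψ (F i t) else F i t)) =
      ⨆ t, sgn (σ a) * ψ (g t) + R t := by
    refine iSup_congr fun t => ?_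
    rw [hsplit σ (fun i t => if i = a then ψ (F i t) else F i t) t, hG t, if_pos rfl]
  have e2 : (⨆ t, ∑ i, sgn (e σ i) * (if i = a then ψ (F i t) else F i t)) =
      ⨆ t, -sgn (σ a) * ψ (g t) + R t := by
    refine iSup_congr fun t => ?_
    rw [hsplit (e σ) (fun i t => if i = a then ψ (F i t) else F i t) t, hGe t, if_pos rfl, hea, sgn_not]
  have e3 : (⨆ t, ∑ i, sgn (σ i) * F i t) = ⨆ t, sgn (σ a) * g t + R t := by
    refine iSup_congr fun t => ?_
    rw [hsplit σ F t]
  have e4 : (⨆ t, ∑ i, sgn (e σ i) * F i t) = ⨆ t, -sgn (σ a) * g t + R t := by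
    refine iSup_congr fun t => ?_
    rw [hsplit (e σ) F t, hRe t, hea, sgn_not]
  rw [e1, e2, e3, e4]
  have hb1 : BddAbove (Set.range fun t => sgn (σ a) * g t + R t) := by
    have : (fun t => sgn (σ a) * g t + R t) = fun t => ∑ i, sgn (σ i) * F i t :=
      funext fun t => (hsplit σ F t).symm
    rw [this]; exact hF.bdd_sum σ
  have hb2 : BddAbove (Set.range fun t => -sgn (σ a) * g t + R t) := by
    have : (fun t => -sgn (σ a) * g t + R t) = fun t => ∑ i, sgn (e σ i) * F i t := by
      funext t; rw [hsplit (e σ) F t, hRe t, hea, sgn_not]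
    rw [this]; exact hF.bdd_sum (e σ)
  exact pair_ineq R g ψ hψ (sgn (σ a)) (abs_sgn _) hb1 hb2

lemma Rad_contract {n : ℕ} {F : Fin n → ι → ℝ} (hF : Bdd F) (φ : Fin n → ℝ → ℝ)
    (hφ : ∀ i x y, |φ i x - φ i y| ≤ |x - y|) :
    Rad (fun i t => φ i (F i t)) ≤ Rad F := by
  classical
  have main : ∀ s : Finset (Fin n),
      Rad (fun i t => if i ∈ s then φ i (F i t) else F i t) ≤ Rad F := by
    intro s
    induction s using Finset.induction_on with
    | empty => simp
    | @insert a s ha ih =>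
      set H : Fin n → ι → ℝ := fun i t => if i ∈ s then φ i (F i t) else F i t with hH
      have hBddH : Bdd H := by
        intro i
        by_cases h : i ∈ s
        · obtain ⟨C, hC⟩ := (hF.comp φ hφ) i
          exact ⟨C, fun t => by simpa [hH, h] using hC t⟩
        · obtain ⟨C, hC⟩ := hF i
          exact ⟨C, fun t => by simpa [hH, h] using hC t⟩
      have heq : (fun i t => if i ∈ insert a s then φ i (F i t) else F i t) =
          fun i t => if i = a then φ a (H i t) else H i t := by
        funext i t
        by_cases h : i = a
        · subst h; simp [hH, ha]
        · simp [hH, h, Finset.mem_insert]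
      rw [heq]
      calc Rad (fun i t => if i = a then φ a (H i t) else H i t) ≤ Rad H :=
            Rad_contract_one hBddH a (φ a) (hφ a)
        _ ≤ Rad F := ih
  have := main Finset.univ
  simpa using this

lemma Rad_max_le {n : ℕ} {F G : Fin n → ι → ℝ} (hF : Bdd F) (hG : Bdd G) :
    Rad (fun i t => max (F i t) (G i t)) ≤ Rad F + Rad G := by
  have hmax : ∀ a b : ℝ, max a b = (1/2) * ((a + b) + |a - b|) := by
    intro a b
    rcases le_total a b with h | h
    · rw [max_eq_right h, abs_of_nonpos (by linarith)]; ring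
    · rw [max_eq_left h, abs_of_nonneg (by linarith)]; ring
  have hsub : Bdd (fun i t => F i t - G i t) := by
    have := hF.add hG.neg
    simpa [sub_eq_add_neg] using this
  have habs : Bdd (fun i t => |F i t - G i t|) := by
    have := hsub.comp (fun _ x => |x|) (fun _ x y => abs_abs_sub_abs_le_abs_sub x y)
    simpa using this
  calc Rad (fun i t => max (F i t) (G i t))
      = Rad (fun i t => (1/2) * ((F i t + G i t) + |F i t - G i t|)) := by
        simp only [hmax]
    _ = (1/2) * Rad (fun i t => (F i t + G i t) + |F i t - G i t|) :=
        Rad_smul (by norm_num)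
    _ ≤ (1/2) * ((Rad (fun i t => F i t + G i t)) + Rad (fun i t => |F i t - G i t|)) := by
        have := Rad_add_le (hF.add hG) habs
        linarith
    _ ≤ (1/2) * ((Rad F + Rad G) + (Rad F + Rad G)) := by
        have h1 : Rad (fun i t => F i t + G i t) ≤ Rad F + Rad G := Rad_add_le hF hG
        have h2 : Rad (fun i t => |F i t - G i t|) ≤ Rad F + Rad G := by
          calc Rad (fun i t => |F i t - G i t|) ≤ Rad (fun i t => F i t - G i t) :=
                Rad_contract hsub (fun _ x => |x|) (fun _ x y => abs_abs_sub_abs_le_abs_sub x y)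
            _ ≤ Rad F + Rad (fun i t => -G i t) := by
                have := Rad_add_le hF hG.neg
                simpa [sub_eq_add_neg] using this
            _ = Rad F + Rad G := by rw [Rad_neg]
        linarith
    _ = Rad F + Rad G := by ring


lemma Bdd_sup' {n : ℕ} {κ : Type*} (s : Finset κ) (hs : s.Nonempty) (g : Fin n → κ → ι → ℝ)
    (hg : ∀ j, Bdd (fun i t => g i j t)) :
    Bdd (fun i t => s.sup' hs (fun j => g i j t)) := by
  intro i
  have hg' : ∀ j, ∃ C, ∀ t, |g i j t| ≤ C := fun j => hg j i
  choose C hC using hg'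
  have hC0 : ∀ j, 0 ≤ C j := by
    intro j
    obtain ⟨t⟩ := ‹Nonempty ι›
    exact (abs_nonneg _).trans (hC j t)
  refine ⟨∑ j ∈ s, C j, fun t => ?_⟩
  rw [abs_le]
  constructor
  · obtain ⟨j₀, hj₀⟩ := id hs
    calc -∑ j ∈ s, C j ≤ -C j₀ :=
          neg_le_neg (Finset.single_le_sum (fun j _ => hC0 j) hj₀)
      _ ≤ g i j₀ t := (abs_le.1 (hC j₀ t)).1
      _ ≤ s.sup' hs (fun j => g i j t) := Finset.le_sup' (fun j => g i j t) hj₀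
  · refine Finset.sup'_le _ _ fun j hj => ?_
    calc g i j t ≤ C j := (abs_le.1 (hC j t)).2
      _ ≤ ∑ j ∈ s, C j := Finset.single_le_sum (fun j _ => hC0 j) hj

lemma Rad_sup' {n : ℕ} {κ : Type*} (s : Finset κ) (hs : s.Nonempty) (g : Fin n → κ → ι → ℝ)
    (hg : ∀ j, Bdd (fun i t => g i j t)) :
    Rad (fun i t => s.sup' hs (fun j => g i j t)) ≤ ∑ j ∈ s, Rad (fun i t => g i j t) := by
  induction hs using Finset.Nonempty.cons_induction with
  | singleton j => simp
  | cons a s ha hs ih =>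
    have heq : (fun i t => (Finset.cons a s ha).sup' (Finset.cons_nonempty ha) (fun j => g i j t)) =
        fun i t => max (g i a t) (s.sup' hs (fun j => g i j t)) := by
      funext i t
      rw [Finset.sup'_cons hs]
    rw [heq, Finset.sum_cons]
    calc Rad (fun i t => max (g i a t) (s.sup' hs (fun j => g i j t)))
        ≤ Rad (fun i t => g i a t) + Rad (fun i t => s.sup' hs (fun j => g i j t)) :=
          Rad_max_le (hg a) (Bdd_sup' s hs g hg)
      _ ≤ Rad (fun i t => g i a t) + ∑ j ∈ s, Rad (fun i t => g i j t) := by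
          linarith [ih]

/-- Cauchy–Schwarz for dot products of real vectors -/
lemma abs_dot_le {P : ℕ} (x y : Fin P → ℝ) :
    |x ⬝ᵥ y| ≤ Real.sqrt (∑ q, x q ^ 2) * Real.sqrt (∑ q, y q ^ 2) := by
  have h := Finset.sum_mul_sq_le_sq_mul_sq Finset.univ x y
  have h1 : |x ⬝ᵥ y| = Real.sqrt ((∑ q, x q * y q) ^ 2) := by
    rw [Real.sqrt_sq_eq_abs]; rfl
  rw [h1, ← Real.sqrt_mul (by positivity)]
  exact Real.sqrt_le_sqrt h

lemma sgn_orth' {n : ℕ} (i j : Fin n) :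
    ∑ σ : Fin n → Bool, sgn (σ i) * sgn (σ j) = if i = j then (2:ℝ)^n else 0 := by
  classical
  split_ifs with h
  · subst h
    have : ∀ σ : Fin n → Bool, sgn (σ i) * sgn (σ i) = 1 := by
      intro σ; cases σ i <;> simp [sgn]
    rw [Finset.sum_congr rfl fun σ _ => this σ]
    simp [Finset.card_univ]
  · refine Finset.sum_ninvolution (fun σ => Function.update σ i (!σ i)) ?_ ?_ (fun _ => Finset.mem_univ _) ?_
    · intro σ
      simp only [Function.update_self, Function.update_of_ne (Ne.symm h), sgn_not]
      ring
    · intro σ _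
      intro hcontra
      have := congrFun hcontra i
      simp at this
    · intro σ; funext k
      by_cases hk : k = i
      · subst hk; simp
      · simp [Function.update_of_ne hk]

lemma rad_sq_sum {n P : ℕ} (u : Fin n → Fin P → ℝ) :
    ∑ σ : Fin n → Bool, (∑ q, (∑ i, sgn (σ i) * u i q)^2) =
      2^n * ∑ i, ∑ q, (u i q)^2 := by
  classical
  rw [Finset.sum_comm]
  have hq : ∀ q : Fin P, ∑ σ : Fin n → Bool, (∑ i, sgn (σ i) * u i q)^2 =
      2^n * ∑ i, (u i q)^2 := by
    intro q
    have expand : ∀ σ : Fin n → Bool, (∑ i, sgn (σ i) * u i q)^2 =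
        ∑ i, ∑ j, (sgn (σ i) * u i q) * (sgn (σ j) * u j q) := by
      intro σ; rw [sq, Finset.sum_mul_sum]
    rw [Finset.sum_congr rfl fun σ _ => expand σ]
    rw [Finset.sum_comm]
    have hi : ∀ i, ∑ σ : Fin n → Bool, ∑ j, (sgn (σ i) * u i q) * (sgn (σ j) * u j q)
        = (u i q)^2 * 2^n := by
      intro i
      rw [Finset.sum_comm]
      have hj : ∀ j, ∑ σ : Fin n → Bool, (sgn (σ i) * u i q) * (sgn (σ j) * u j q)
          = (u i q * u j q) * (if i = j then (2:ℝ)^n else 0) := by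
        intro j
        rw [← sgn_orth' i j, Finset.mul_sum]
        exact Finset.sum_congr rfl fun σ _ => by ring
      rw [Finset.sum_congr rfl fun j _ => hj j]
      simp only [mul_ite, mul_zero]
      rw [Finset.sum_ite_eq]
      simp [sq]
    rw [Finset.sum_congr rfl fun i _ => hi i]
    rw [Finset.mul_sum]
    exact Finset.sum_congr rfl fun i _ => by ring
  rw [Finset.sum_congr rfl fun q _ => hq q, ← Finset.mul_sum, Finset.sum_comm]

lemma dot_rewrite {P : ℕ} (A : Matrix (Fin P) (Fin P) ℝ) (hA : IsUnit A.det)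
    (w V : Fin P → ℝ) : w ⬝ᵥ V = Matrix.vecMul w A ⬝ᵥ (A⁻¹ *ᵥ V) := by
  have h : A *ᵥ (A⁻¹ *ᵥ V) = V := by
    rw [Matrix.mulVec_mulVec, Matrix.mul_nonsing_inv A hA, Matrix.one_mulVec]
  conv_lhs => rw [← h]
  rw [Matrix.dotProduct_mulVec]

lemma dot_bound {P : ℕ} (A : Matrix (Fin P) (Fin P) ℝ) (hA : IsUnit A.det) (M : ℝ)
    (w : {w : Fin P → ℝ // Real.sqrt (∑ q, (Matrix.vecMul w A q) ^ 2) ≤ M})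
    (V : Fin P → ℝ) :
    |w.1 ⬝ᵥ V| ≤ M * Real.sqrt (∑ q, ((A⁻¹ *ᵥ V) q) ^ 2) := by
  rw [dot_rewrite A hA]
  calc |Matrix.vecMul w.1 A ⬝ᵥ (A⁻¹ *ᵥ V)|
      ≤ Real.sqrt (∑ q, (Matrix.vecMul w.1 A q) ^ 2) *
          Real.sqrt (∑ q, ((A⁻¹ *ᵥ V) q) ^ 2) := abs_dot_le _ _
    _ ≤ M * Real.sqrt (∑ q, ((A⁻¹ *ᵥ V) q) ^ 2) :=
        mul_le_mul_of_nonneg_right w.2 (Real.sqrt_nonneg _)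

lemma linear_bound {n P : ℕ} (A : Matrix (Fin P) (Fin P) ℝ) (hA : IsUnit A.det)
    (M : ℝ) (hM : 0 ≤ M) (v : Fin n → Fin P → ℝ) :
    Rad (ι := {w : Fin P → ℝ // Real.sqrt (∑ q, (Matrix.vecMul w A q) ^ 2) ≤ M})
      (fun i w => w.1 ⬝ᵥ v i) ≤
      2^n * (M * Real.sqrt (∑ i, ∑ q, ((A⁻¹ *ᵥ v i) q) ^ 2)) := by
  classical
  haveI : Nonempty {w : Fin P → ℝ // Real.sqrt (∑ q, (Matrix.vecMul w A q) ^ 2) ≤ M} :=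
    ⟨⟨0, by simpa [Matrix.zero_vecMul] using hM⟩⟩
  set u : Fin n → Fin P → ℝ := fun i => A⁻¹ *ᵥ v i with hu
  set S : (Fin n → Bool) → ℝ := fun σ => ∑ q, (∑ i, sgn (σ i) * u i q) ^ 2 with hS
  have hS0 : ∀ σ, 0 ≤ S σ := fun σ => Finset.sum_nonneg fun q _ => sq_nonneg _
  have step1 : ∀ σ : Fin n → Bool,
      (⨆ w : {w : Fin P → ℝ // Real.sqrt (∑ q, (Matrix.vecMul w A q) ^ 2) ≤ M},
        ∑ i, sgn (σ i) * (w.1 ⬝ᵥ v i)) ≤ M * Real.sqrt (S σ) := by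
    intro σ
    refine ciSup_le fun w => ?_
    have hdot : ∑ i, sgn (σ i) * (w.1 ⬝ᵥ v i) = w.1 ⬝ᵥ (fun q => ∑ i, sgn (σ i) * v i q) := by
      calc ∑ i, sgn (σ i) * (w.1 ⬝ᵥ v i)
          = ∑ i, ∑ q, sgn (σ i) * (w.1 q * v i q) := by
            refine Finset.sum_congr rfl fun i _ => ?_
            rw [dotProduct, Finset.mul_sum]
        _ = ∑ q, ∑ i, sgn (σ i) * (w.1 q * v i q) := Finset.sum_comm
        _ = ∑ q, w.1 q * ∑ i, sgn (σ i) * v i q := by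
            refine Finset.sum_congr rfl fun q _ => ?_
            rw [Finset.mul_sum]
            exact Finset.sum_congr rfl fun i _ => by ring
        _ = _ := rfl
    have hinv : (A⁻¹ *ᵥ (fun q => ∑ i, sgn (σ i) * v i q)) = fun q => ∑ i, sgn (σ i) * u i q := by
      funext q
      calc (A⁻¹ *ᵥ (fun q => ∑ i, sgn (σ i) * v i q)) q
          = ∑ p, A⁻¹ q p * ∑ i, sgn (σ i) * v i p := by
            rw [Matrix.mulVec, dotProduct]
        _ = ∑ p, ∑ i, A⁻¹ q p * (sgn (σ i) * v i p) := by
            refine Finset.sum_congr rfl fun p _ => Finset.mul_sum _ _ _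
        _ = ∑ i, ∑ p, A⁻¹ q p * (sgn (σ i) * v i p) := Finset.sum_comm
        _ = ∑ i, sgn (σ i) * u i q := by
            refine Finset.sum_congr rfl fun i _ => ?_
            rw [hu]
            show ∑ p, A⁻¹ q p * (sgn (σ i) * v i p) = sgn (σ i) * ((A⁻¹ *ᵥ v i) q)
            rw [Matrix.mulVec, dotProduct, Finset.mul_sum]
            exact Finset.sum_congr rfl fun p _ => by ring
    calc ∑ i, sgn (σ i) * (w.1 ⬝ᵥ v i) ≤ |∑ i, sgn (σ i) * (w.1 ⬝ᵥ v i)| := le_abs_self _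
      _ ≤ M * Real.sqrt (∑ q, ((A⁻¹ *ᵥ (fun q => ∑ i, sgn (σ i) * v i q)) q) ^ 2) := by
          rw [hdot]; exact dot_bound A hA M w _
      _ = M * Real.sqrt (S σ) := by rw [hinv, hS]
  have main1 : Rad (ι := {w : Fin P → ℝ // Real.sqrt (∑ q, (Matrix.vecMul w A q) ^ 2) ≤ M})
      (fun i w => w.1 ⬝ᵥ v i) ≤ ∑ σ : Fin n → Bool, M * Real.sqrt (S σ) := by
    rw [Rad]; exact Finset.sum_le_sum fun σ _ => step1 σ
  have main2 : ∑ σ : Fin n → Bool, M * Real.sqrt (S σ) ≤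
      2 ^ n * (M * Real.sqrt (∑ i, ∑ q, ((A⁻¹ *ᵥ v i) q) ^ 2)) := by
    rw [← Finset.mul_sum]
    have h2 : ∑ σ : Fin n → Bool, S σ = 2^n * ∑ i, ∑ q, ((A⁻¹ *ᵥ v i) q)^2 := rad_sq_sum u
    have hsum_le : ∑ σ : Fin n → Bool, Real.sqrt (S σ) ≤
        Real.sqrt ((2:ℝ)^n * ∑ σ : Fin n → Bool, S σ) := by
      have h := sq_sum_le_card_mul_sum_sq (s := (Finset.univ : Finset (Fin n → Bool)))
        (f := fun σ => Real.sqrt (S σ))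
      have hcard : ((Finset.univ : Finset (Fin n → Bool)).card : ℝ) = 2^n := by
        simp [Finset.card_univ]
      have hsq : ∀ σ : Fin n → Bool, Real.sqrt (S σ) ^ 2 = S σ :=
        fun σ => Real.sq_sqrt (hS0 σ)
      have h1 : (∑ σ : Fin n → Bool, Real.sqrt (S σ)) ^ 2 ≤
          (2:ℝ)^n * ∑ σ : Fin n → Bool, S σ := by
        calc (∑ σ : Fin n → Bool, Real.sqrt (S σ)) ^ 2
            ≤ ((Finset.univ : Finset (Fin n → Bool)).card : ℝ) *
                ∑ σ : Fin n → Bool, Real.sqrt (S σ) ^ 2 := h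
          _ = (2:ℝ)^n * ∑ σ : Fin n → Bool, S σ := by
              rw [hcard, Finset.sum_congr rfl fun σ _ => hsq σ]
      calc ∑ σ : Fin n → Bool, Real.sqrt (S σ)
          = Real.sqrt ((∑ σ : Fin n → Bool, Real.sqrt (S σ)) ^ 2) := by
            rw [Real.sqrt_sq (Finset.sum_nonneg fun σ _ => Real.sqrt_nonneg _)]
        _ ≤ Real.sqrt ((2:ℝ)^n * ∑ σ : Fin n → Bool, S σ) := Real.sqrt_le_sqrt h1
    have hfin : Real.sqrt ((2:ℝ)^n * ∑ σ : Fin n → Bool, S σ) =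
        2^n * Real.sqrt (∑ i, ∑ q, ((A⁻¹ *ᵥ v i) q)^2) := by
      rw [h2]
      have : (2:ℝ)^n * (2^n * ∑ i, ∑ q, ((A⁻¹ *ᵥ v i) q)^2) =
          ((2:ℝ)^n)^2 * ∑ i, ∑ q, ((A⁻¹ *ᵥ v i) q)^2 := by ring
      rw [this, Real.sqrt_mul (sq_nonneg _), Real.sqrt_sq (by positivity)]
    calc M * ∑ σ : Fin n → Bool, Real.sqrt (S σ)
        ≤ M * Real.sqrt ((2:ℝ)^n * ∑ σ : Fin n → Bool, S σ) :=
          mul_le_mul_of_nonneg_left hsum_le hM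
      _ = 2 ^ n * (M * Real.sqrt (∑ i, ∑ q, ((A⁻¹ *ᵥ v i) q) ^ 2)) := by
          rw [hfin]; ring
  exact main1.trans main2

/-- the unit ramp function -/
noncomputable def psi : ℝ → ℝ := fun u => if u ≤ 0 then 1 else if 1 < u then 0 else 1 - u

lemma psi_eq (u : ℝ) : psi u = min 1 (max 0 (1 - u)) := by
  unfold psi
  split_ifs with h1 h2
  · rw [max_eq_right (by linarith : (0:ℝ) ≤ 1 - u), min_eq_left (by linarith : (1:ℝ) ≤ 1 - u)]
  · rw [max_eq_left (by linarith : (1:ℝ) - u ≤ 0), min_eq_right (by norm_num : (0:ℝ) ≤ 1)]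
  · rw [max_eq_right (by linarith : (0:ℝ) ≤ 1 - u), min_eq_right (by linarith : (1:ℝ) - u ≤ 1)]

lemma psi_lip (x y : ℝ) : |psi x - psi y| ≤ |x - y| := by
  rw [psi_eq, psi_eq]
  calc |min 1 (max 0 (1 - x)) - min 1 (max 0 (1 - y))|
      ≤ max |(1:ℝ) - 1| |max 0 (1 - x) - max 0 (1 - y)| := abs_min_sub_min_le_max _ _ _ _
    _ = |max 0 (1 - x) - max 0 (1 - y)| := by simp
    _ ≤ max |(0:ℝ) - 0| |(1 - x) - (1 - y)| := abs_max_sub_max_le_max _ _ _ _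
    _ = |x - y| := by
        have : (1 - x) - (1 - y) = y - x := by ring
        rw [this]
        simp [abs_sub_comm]

lemma ramp_eq {γ : ℝ} (hγ : 0 < γ) (x : ℝ) :
    (if x ≤ 0 then (1:ℝ) else if γ < x then 0 else 1 - x/γ) = psi ((1/γ) * x) := by
  have e1 : (1/γ) * x = x/γ := by ring
  unfold psi
  rw [e1]
  have h1 : x/γ ≤ 0 ↔ x ≤ 0 := by rw [div_le_iff₀ hγ, zero_mul]
  have h2 : 1 < x/γ ↔ γ < x := by rw [lt_div_iff₀ hγ, one_mul]
  simp only [h1, h2]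

/-- ciSup along an equivalence -/
lemma ciSup_equiv {α β : Type*} (e : α ≃ β) (f : β → ℝ) : (⨆ b, f b) = ⨆ a, f (e a) := by
  rw [iSup, iSup]
  congr 1
  exact (e.surjective.range_comp f).symm

end RadAux

open RadAux

/-- Margin loss complexity bound for multiclass linear models: for
the class `F_M = {(x,y) ↦ ⟨w, Φ(x)[y]⟩ : ‖Aᵀw‖₂ ≤ M}` and the γ-margin (ramp) loss
composed with the multiclass margin, the empirical Rademacher complexity of the
loss class is bounded by `(c^{3/2} M/(γ n))·√(Tr K_A)` where
`Tr K_A = Σ_{i,y} ‖A⁻¹Φ(x_i)[y]‖₂²`. -/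
theorem multiclass_margin_loss_rademacher_bound
    {X : Type*} {c n P : ℕ} (hc : 1 < c) (hn : 0 < n)
    (Φ : X → Fin c → Fin P → ℝ)
    (A : Matrix (Fin P) (Fin P) ℝ) (hA : IsUnit A.det)
    (M γ : ℝ) (hM : 0 ≤ M) (hγ : 0 < γ)
    (xs : Fin n → X) (ys : Fin n → Fin c) :
    (∑ σ : Fin n → Bool,
        ⨆ w : {w : Fin P → ℝ // Real.sqrt (∑ q, (Matrix.vecMul w A q) ^ 2) ≤ M},
          (1 / (n : ℝ)) * ∑ i, (if σ i then (1 : ℝ) else -1) *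
            (let marg := w.1 ⬝ᵥ Φ (xs i) (ys i) -
                ⨆ y' : {y' : Fin c // y' ≠ ys i}, w.1 ⬝ᵥ Φ (xs i) y'.1
             if marg ≤ 0 then 1 else if γ < marg then 0 else 1 - marg / γ))
        / 2 ^ n
      ≤ ((c : ℝ) ^ ((3 : ℝ) / 2) * M / (γ * n)) *
          Real.sqrt (∑ i, ∑ y, ∑ q, ((A⁻¹ *ᵥ Φ (xs i) y) q) ^ 2) := by
  classical
  haveI hne : Nonempty {w : Fin P → ℝ // Real.sqrt (∑ q, (Matrix.vecMul w A q) ^ 2) ≤ M} :=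
    ⟨⟨0, by simpa [Matrix.zero_vecMul] using hM⟩⟩
  set ιT := {w : Fin P → ℝ // Real.sqrt (∑ q, (Matrix.vecMul w A q) ^ 2) ≤ M} with hιT
  set T := Real.sqrt (∑ i, ∑ y, ∑ q, ((A⁻¹ *ᵥ Φ (xs i) y) q) ^ 2) with hT
  have hTnn : 0 ≤ T := Real.sqrt_nonneg _
  -- selection bound on the trace
  have hsel : ∀ s : Fin n → Fin c,
      Real.sqrt (∑ i, ∑ q, ((A⁻¹ *ᵥ Φ (xs i) (s i)) q) ^ 2) ≤ T := by
    intro s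
    refine Real.sqrt_le_sqrt (Finset.sum_le_sum fun i _ => ?_)
    exact Finset.single_le_sum
      (f := fun y => ∑ q, ((A⁻¹ *ᵥ Φ (xs i) y) q) ^ 2)
      (fun y _ => Finset.sum_nonneg fun q _ => sq_nonneg _) (Finset.mem_univ (s i))
  -- linear families and their bounds
  have hBl : ∀ s : Fin n → Fin c, Bdd (fun i (w : ιT) => w.1 ⬝ᵥ Φ (xs i) (s i)) := by
    intro s i
    exact ⟨M * Real.sqrt (∑ q, ((A⁻¹ *ᵥ Φ (xs i) (s i)) q) ^ 2),
      fun w => dot_bound A hA M w _⟩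
  have hRl : ∀ s : Fin n → Fin c,
      Rad (fun i (w : ιT) => w.1 ⬝ᵥ Φ (xs i) (s i)) ≤ 2 ^ n * (M * T) := by
    intro s
    calc Rad (fun i (w : ιT) => w.1 ⬝ᵥ Φ (xs i) (s i))
        ≤ 2 ^ n * (M * Real.sqrt (∑ i, ∑ q, ((A⁻¹ *ᵥ Φ (xs i) (s i)) q) ^ 2)) :=
          linear_bound A hA M hM (fun i => Φ (xs i) (s i))
      _ ≤ 2 ^ n * (M * T) := by
          exact mul_le_mul_of_nonneg_left
            (mul_le_mul_of_nonneg_left (hsel s) hM) (by positivity)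
  -- enumerate the wrong labels
  haveI hne' : Nonempty (Fin (c - 1)) := ⟨⟨0, by omega⟩⟩
  have hcard : ∀ i : Fin n, Fintype.card {y' : Fin c // y' ≠ ys i} = c - 1 := by
    intro i
    simp [Fintype.card_subtype_compl, Fintype.card_subtype_eq]
  let e : ∀ i : Fin n, Fin (c - 1) ≃ {y' : Fin c // y' ≠ ys i} :=
    fun i => (Fintype.equivFinOfCardEq (hcard i)).symm
  -- the sup part
  set Q : Fin n → ιT → ℝ :=
    fun i w => ⨆ y' : {y' : Fin c // y' ≠ ys i}, w.1 ⬝ᵥ Φ (xs i) y'.1 with hQ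
  set g : Fin n → Fin (c - 1) → ιT → ℝ :=
    fun i j w => w.1 ⬝ᵥ Φ (xs i) ((e i j) : {y' : Fin c // y' ≠ ys i}).1 with hg
  have hgB : ∀ j, Bdd (fun i (w : ιT) => g i j w) := fun j => hBl (fun i => ((e i j) : {y' : Fin c // y' ≠ ys i}).1)
  have hQeq : Q = fun i w => Finset.univ.sup' Finset.univ_nonempty (fun j => g i j w) := by
    funext i w
    show (⨆ y' : {y' : Fin c // y' ≠ ys i}, w.1 ⬝ᵥ Φ (xs i) y'.1) =
      Finset.univ.sup' Finset.univ_nonempty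
        (fun j => w.1 ⬝ᵥ Φ (xs i) ((e i j) : {y' : Fin c // y' ≠ ys i}).1)
    rw [ciSup_equiv (e i) (fun y' => w.1 ⬝ᵥ Φ (xs i) y'.1),
      ← Finset.sup'_univ_eq_ciSup]
  have hQB : Bdd Q := by
    rw [hQeq]; exact Bdd_sup' Finset.univ Finset.univ_nonempty g hgB
  have hRQ : Rad Q ≤ ((c : ℝ) - 1) * (2 ^ n * (M * T)) := by
    rw [hQeq]
    calc Rad (fun i (w : ιT) => Finset.univ.sup' Finset.univ_nonempty (fun j => g i j w))
        ≤ ∑ j : Fin (c - 1), Rad (fun i (w : ιT) => g i j w) :=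
          Rad_sup' Finset.univ Finset.univ_nonempty g hgB
      _ ≤ ∑ _j : Fin (c - 1), 2 ^ n * (M * T) :=
          Finset.sum_le_sum fun j _ => hRl (fun i => ((e i j) : {y' : Fin c // y' ≠ ys i}).1)
      _ = ((c : ℝ) - 1) * (2 ^ n * (M * T)) := by
          rw [Finset.sum_const, Finset.card_univ, Fintype.card_fin, nsmul_eq_mul]
          congr 1
          have : (1:ℕ) ≤ c := hc.le
          push_cast [Nat.cast_sub this]
          ring
  -- the margin family
  set m : Fin n → ιT → ℝ := fun i w => w.1 ⬝ᵥ Φ (xs i) (ys i) - Q i w with hm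
  have hmB : Bdd m := by
    have h := (hBl ys).add hQB.neg
    intro i
    obtain ⟨C, hC⟩ := h i
    exact ⟨C, fun w => by simpa [hm, sub_eq_add_neg] using hC w⟩
  have hRm : Rad m ≤ (c : ℝ) * (2 ^ n * (M * T)) := by
    have heq : m = fun i w => (fun i (w : ιT) => w.1 ⬝ᵥ Φ (xs i) (ys i)) i w +
        (fun i (w : ιT) => -Q i w) i w := by
      funext i w; rw [hm]; ring
    calc Rad m ≤ Rad (fun i (w : ιT) => w.1 ⬝ᵥ Φ (xs i) (ys i)) +
          Rad (fun i (w : ιT) => -Q i w) := by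
          rw [heq]; exact Rad_add_le (hBl ys) hQB.neg
      _ = Rad (fun i (w : ιT) => w.1 ⬝ᵥ Φ (xs i) (ys i)) + Rad Q := by rw [Rad_neg]
      _ ≤ 2 ^ n * (M * T) + ((c : ℝ) - 1) * (2 ^ n * (M * T)) := add_le_add (hRl ys) hRQ
      _ = (c : ℝ) * (2 ^ n * (M * T)) := by ring
  -- the loss family
  set L : Fin n → ιT → ℝ := fun i w => psi ((1/γ) * m i w) with hL
  have hLB : Rad L ≤ (1/γ) * ((c : ℝ) * (2 ^ n * (M * T))) := by
    have hsm : Bdd (fun i (w : ιT) => (1/γ) * m i w) := hmB.smul _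
    calc Rad L ≤ Rad (fun i (w : ιT) => (1/γ) * m i w) :=
          Rad_contract hsm (fun _ => psi) (fun _ x y => psi_lip x y)
      _ = (1/γ) * Rad m := Rad_smul (by positivity)
      _ ≤ (1/γ) * ((c : ℝ) * (2 ^ n * (M * T))) := by
          have : (0:ℝ) ≤ 1/γ := by positivity
          exact mul_le_mul_of_nonneg_left hRm this
  -- rewrite the LHS
  have hLHS : ∀ σ : Fin n → Bool,
      (⨆ w : ιT,
          (1 / (n : ℝ)) * ∑ i, (if σ i then (1 : ℝ) else -1) *
            (let marg := w.1 ⬝ᵥ Φ (xs i) (ys i) -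
                ⨆ y' : {y' : Fin c // y' ≠ ys i}, w.1 ⬝ᵥ Φ (xs i) y'.1
             if marg ≤ 0 then 1 else if γ < marg then 0 else 1 - marg / γ)) =
      (1 / (n : ℝ)) * ⨆ w : ιT, ∑ i, sgn (σ i) * L i w := by
    intro σ
    rw [Real.mul_iSup_of_nonneg (by positivity)]
    refine iSup_congr fun w => ?_
    congr 1
    refine Finset.sum_congr rfl fun i _ => ?_
    congr 1
    show (if m i w ≤ 0 then (1:ℝ) else if γ < m i w then 0 else 1 - m i w / γ) = L i w
    rw [hL]
    exact ramp_eq hγ (m i w)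
  calc (∑ σ : Fin n → Bool,
        ⨆ w : ιT,
          (1 / (n : ℝ)) * ∑ i, (if σ i then (1 : ℝ) else -1) *
            (let marg := w.1 ⬝ᵥ Φ (xs i) (ys i) -
                ⨆ y' : {y' : Fin c // y' ≠ ys i}, w.1 ⬝ᵥ Φ (xs i) y'.1
             if marg ≤ 0 then 1 else if γ < marg then 0 else 1 - marg / γ))
        / 2 ^ n
      = ((1 / (n : ℝ)) * Rad L) / 2 ^ n := by
        rw [Finset.sum_congr rfl fun σ _ => hLHS σ, ← Finset.mul_sum, Rad]
    _ ≤ ((1 / (n : ℝ)) * ((1/γ) * ((c : ℝ) * (2 ^ n * (M * T))))) / 2 ^ n := by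
        have hn' : (0:ℝ) < n := by exact_mod_cast hn
        gcongr
    _ = ((c : ℝ) * M / (γ * n)) * T := by
        have hn' : (0:ℝ) < n := by exact_mod_cast hn
        have h2n : (0:ℝ) < 2 ^ n := by positivity
        field_simp
    _ ≤ ((c : ℝ) ^ ((3 : ℝ) / 2) * M / (γ * n)) * T := by
        have hn' : (0:ℝ) < n := by exact_mod_cast hn
        have hc32 : (c : ℝ) ≤ (c : ℝ) ^ ((3 : ℝ) / 2) := by
          have h1 : (1:ℝ) ≤ (c:ℝ) := by exact_mod_cast hc.le
          calc (c:ℝ) = (c:ℝ) ^ (1:ℝ) := (Real.rpow_one _).symm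
            _ ≤ (c:ℝ) ^ ((3:ℝ)/2) := Real.rpow_le_rpow_of_exponent_le h1 (by norm_num)
        gcongr
end

section
/- (Multiclass margin class decomposition) Let F be a class of functions f: X → ℝ^c and for y ∈ {1,...,c} let F_y = { x ↦ f(x)[y] : f ∈ F }. For the γ-margin loss class ℓ_γ(F, ·) = { (x,y) ↦ φ_γ(μ(f(x), y)) : f ∈ F } with μ(f(x), y) = f(x)[y] − max_{y'≠y} f(x)[y'] and φ_γ the 1/γ-Lipschitz ramp function, the empirical Rademacher complexity satisfies R̂_S(ℓ_γ(F, ·)) ≤ (c/γ) Σ_{y=1}^c R̂_S(F_y). -/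
open Finset

namespace MMCD

noncomputable section

set_option linter.unusedSectionVars false

variable {α : Type*} [Nonempty α] {n : ℕ}

def sg {n : ℕ} (σ : Fin n → Bool) (i : Fin n) : ℝ := if σ i then 1 else -1

lemma abs_sg {n : ℕ} (σ : Fin n → Bool) (i : Fin n) : |sg σ i| = 1 := by
  unfold sg; split <;> simp

def Rad (n : ℕ) (u : α → Fin n → ℝ) : ℝ :=
  ∑ σ : Fin n → Bool, ⨆ f, ∑ i, sg σ i * u f i

lemma bddS (u : α → Fin n → ℝ) {C : ℝ} (hu : ∀ f i, |u f i| ≤ C) (σ : Fin n → Bool) :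
    BddAbove (Set.range fun f => ∑ i, sg σ i * u f i) := by
  refine ⟨n * C, ?_⟩
  rintro _ ⟨f, rfl⟩
  calc ∑ i, sg σ i * u f i ≤ ∑ _i : Fin n, C := by
        refine Finset.sum_le_sum fun i _ => ?_
        calc sg σ i * u f i ≤ |sg σ i * u f i| := le_abs_self _
          _ = |u f i| := by rw [abs_mul, abs_sg, one_mul]
          _ ≤ C := hu f i
    _ = n * C := by rw [Finset.sum_const, Finset.card_univ, Fintype.card_fin, nsmul_eq_mul]

lemma ciSup_add_ciSup_le {P Q : α → ℝ} {r : ℝ} (h : ∀ f g, P f + Q g ≤ r) :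
    (⨆ f, P f) + (⨆ f, Q f) ≤ r := by
  have h1 : ∀ f, P f + (⨆ g, Q g) ≤ r := by
    intro f
    have : (⨆ g, Q g) ≤ r - P f := ciSup_le fun g => by linarith [h f g]
    linarith
  have : (⨆ f, P f) ≤ r - (⨆ g, Q g) := ciSup_le fun f => by linarith [h1 f]
  linarith

lemma sup_step (A a : α → ℝ) {CA Ca : ℝ} (hA : ∀ f, |A f| ≤ CA) (ha : ∀ f, |a f| ≤ Ca)
    (φ : ℝ → ℝ) {L : ℝ} (hL : 0 ≤ L) (hLip : ∀ x y, |φ x - φ y| ≤ L * |x - y|)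
    {ε : ℝ} (hε : ε = 1 ∨ ε = -1) :
    (⨆ f, A f + ε * φ (a f)) + (⨆ f, A f - ε * φ (a f)) ≤
      (⨆ f, A f + ε * (L * a f)) + (⨆ f, A f - ε * (L * a f)) := by
  have hbd : ∀ s : ℝ, (s = 1 ∨ s = -1) → ∀ f, A f + s * (L * a f) ≤ CA + L * Ca := by
    intro s hs f
    have h1 : A f ≤ CA := le_trans (le_abs_self _) (hA f)
    have h2 : |L * a f| ≤ L * Ca := by
      rw [abs_mul, abs_of_nonneg hL]
      exact mul_le_mul_of_nonneg_left (ha f) hL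
    rcases hs with rfl | rfl
    · nlinarith [le_abs_self (L * a f)]
    · nlinarith [neg_abs_le (L * a f)]
  have bdd1 : BddAbove (Set.range fun f => A f + ε * (L * a f)) :=
    ⟨CA + L * Ca, by rintro _ ⟨f, rfl⟩; exact hbd ε hε f⟩
  have bdd2 : BddAbove (Set.range fun f => A f - ε * (L * a f)) := by
    refine ⟨CA + L * Ca, ?_⟩
    rintro _ ⟨f, rfl⟩
    have h := hbd (-ε) (by rcases hε with rfl | rfl <;> simp) f
    rw [neg_mul] at h
    show A f - ε * (L * a f) ≤ CA + L * Ca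
    linarith [h]
  apply ciSup_add_ciSup_le
  intro f g
  have h1 := le_ciSup bdd1 f
  have h2 := le_ciSup bdd2 g
  have h3 := le_ciSup bdd1 g
  have h4 := le_ciSup bdd2 f
  have h5 := hLip (a f) (a g)
  have hms : L * (a f - a g) = L * a f - L * a g := by ring
  have hms2 : L * (a g - a f) = L * a g - L * a f := by ring
  rcases hε with rfl | rfl <;>
    rcases abs_cases (a f - a g) with ⟨e1, _⟩ | ⟨e1, _⟩ <;>
    rcases abs_cases (φ (a f) - φ (a g)) with ⟨e2, _⟩ | ⟨e2, _⟩ <;>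
    rw [e1, e2] at h5 <;>
    linarith [h1, h2, h3, h4, h5, hms, hms2]

lemma rad_step (j : Fin n) (w u : α → Fin n → ℝ) {Cw Cu : ℝ}
    (hw : ∀ f i, |w f i| ≤ Cw) (hu : ∀ f i, |u f i| ≤ Cu)
    (φ : ℝ → ℝ) {L : ℝ} (hL : 0 ≤ L) (hLip : ∀ x y, |φ x - φ y| ≤ L * |x - y|) :
    Rad n (fun f i => if i = j then φ (u f j) else w f i) ≤
    Rad n (fun f i => if i = j then L * u f j else w f i) := by
  classical
  obtain ⟨f₀⟩ := (inferInstance : Nonempty α)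
  have hCw : 0 ≤ Cw := le_trans (abs_nonneg _) (hw f₀ j)
  set fl : (Fin n → Bool) → (Fin n → Bool) := fun σ => Function.update σ j (!σ j) with hfl
  have hinv : Function.Involutive fl := by
    intro σ; funext i
    by_cases h : i = j
    · subst h; simp [fl]
    · simp [fl, Function.update_of_ne h]
  have hsum : ∀ G : (Fin n → Bool) → ℝ, ∑ σ, G (fl σ) = ∑ σ, G σ :=
    fun G => Fintype.sum_bijective fl hinv.bijective _ _ fun σ => rfl
  have hsgne : ∀ (σ : Fin n → Bool) (i : Fin n), i ≠ j → sg (fl σ) i = sg σ i := by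
    intro σ i h; unfold sg; rw [hfl]; simp [Function.update_of_ne h]
  have hsgj : ∀ σ : Fin n → Bool, sg (fl σ) j = - sg σ j := by
    intro σ; unfold sg; rw [hfl]
    simp only [Function.update_self]
    cases σ j <;> simp
  set A : (Fin n → Bool) → α → ℝ := fun σ f => ∑ i ∈ Finset.univ.erase j, sg σ i * w f i with hA
  have hdecomp : ∀ (σ : Fin n → Bool) (v : α → ℝ) (f : α),
      (∑ i, sg σ i * (if i = j then v f else w f i)) = A σ f + sg σ j * v f := by
    intro σ v f
    rw [← Finset.add_sum_erase _ _ (Finset.mem_univ j), if_pos rfl, add_comm]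
    congr 1
    exact Finset.sum_congr rfl fun i hi => by rw [if_neg (Finset.ne_of_mem_erase hi)]
  have hAfl : ∀ (σ : Fin n → Bool) (f : α), A (fl σ) f = A σ f := fun σ f =>
    Finset.sum_congr rfl fun i hi => by rw [hsgne σ i (Finset.ne_of_mem_erase hi)]
  have hsgpm : ∀ (σ : Fin n → Bool) (i : Fin n), sg σ i = 1 ∨ sg σ i = -1 := by
    intro σ i; unfold sg; cases σ i <;> simp
  have hAb : ∀ (σ : Fin n → Bool) (f : α), |A σ f| ≤ n * Cw := by
    intro σ f
    calc |∑ i ∈ Finset.univ.erase j, sg σ i * w f i|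
        ≤ ∑ i ∈ Finset.univ.erase j, |sg σ i * w f i| := Finset.abs_sum_le_sum_abs _ _
      _ ≤ ∑ _i ∈ Finset.univ.erase j, Cw := by
          refine Finset.sum_le_sum fun i _ => ?_
          rw [abs_mul, abs_sg, one_mul]; exact hw f i
      _ = ((Finset.univ.erase j).card : ℝ) * Cw := by rw [Finset.sum_const, nsmul_eq_mul]
      _ ≤ n * Cw := by
          refine mul_le_mul_of_nonneg_right ?_ hCw
          have h1 : (Finset.univ.erase j).card ≤ (Finset.univ : Finset (Fin n)).card :=
            Finset.card_le_card (Finset.erase_subset _ _)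
          have h2 : (Finset.univ : Finset (Fin n)).card = n := by simp
          exact_mod_cast h1.trans_eq h2
  have key : ∀ σ : Fin n → Bool,
      (⨆ f, ∑ i, sg σ i * (if i = j then φ (u f j) else w f i)) +
      (⨆ f, ∑ i, sg (fl σ) i * (if i = j then φ (u f j) else w f i)) ≤
      (⨆ f, ∑ i, sg σ i * (if i = j then L * u f j else w f i)) +
      (⨆ f, ∑ i, sg (fl σ) i * (if i = j then L * u f j else w f i)) := by
    intro σ
    have e1 : ∀ f, (∑ i, sg σ i * (if i = j then φ (u f j) else w f i))
        = A σ f + sg σ j * φ (u f j) := fun f => hdecomp σ (fun f => φ (u f j)) f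
    have e2 : ∀ f, (∑ i, sg (fl σ) i * (if i = j then φ (u f j) else w f i))
        = A σ f - sg σ j * φ (u f j) := by
      intro f
      rw [hdecomp (fl σ) (fun f => φ (u f j)) f, hAfl, hsgj]; ring
    have e3 : ∀ f, (∑ i, sg σ i * (if i = j then L * u f j else w f i))
        = A σ f + sg σ j * (L * u f j) := fun f => hdecomp σ (fun f => L * u f j) f
    have e4 : ∀ f, (∑ i, sg (fl σ) i * (if i = j then L * u f j else w f i))
        = A σ f - sg σ j * (L * u f j) := by
      intro f
      rw [hdecomp (fl σ) (fun f => L * u f j) f, hAfl, hsgj]; ring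
    simp only [e1, e2, e3, e4]
    exact sup_step (A σ) (fun f => u f j) (hAb σ) (fun f => hu f j)
      φ hL hLip (hsgpm σ j)
  unfold Rad
  have h4 : ∑ σ : Fin n → Bool,
      ((⨆ f, ∑ i, sg σ i * (if i = j then φ (u f j) else w f i)) +
       (⨆ f, ∑ i, sg (fl σ) i * (if i = j then φ (u f j) else w f i))) ≤
      ∑ σ : Fin n → Bool,
      ((⨆ f, ∑ i, sg σ i * (if i = j then L * u f j else w f i)) +
       (⨆ f, ∑ i, sg (fl σ) i * (if i = j then L * u f j else w f i))) :=
    Finset.sum_le_sum fun σ _ => key σ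
  rw [Finset.sum_add_distrib, Finset.sum_add_distrib] at h4
  have h2 := hsum (fun σ => ⨆ f, ∑ i, sg σ i * (if i = j then φ (u f j) else w f i))
  have h3 := hsum (fun σ => ⨆ f, ∑ i, sg σ i * (if i = j then L * u f j else w f i))
  linarith [h4, h2, h3]

lemma rad_smul_le (u : α → Fin n → ℝ) {C s : ℝ} (hu : ∀ f i, |u f i| ≤ C) (hs : 0 ≤ s) :
    Rad n (fun f i => s * u f i) ≤ s * Rad n u := by
  unfold Rad
  rw [Finset.mul_sum]
  refine Finset.sum_le_sum fun σ _ => ciSup_le fun f => ?_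
  have e : ∑ i, sg σ i * (s * u f i) = s * ∑ i, sg σ i * u f i := by
    rw [Finset.mul_sum]; exact Finset.sum_congr rfl fun i _ => by ring
  rw [e]
  exact mul_le_mul_of_nonneg_left (le_ciSup (bddS u hu σ) f) hs

lemma rad_neg (u : α → Fin n → ℝ) : Rad n (fun f i => -u f i) = Rad n u := by
  unfold Rad
  have hinv : Function.Involutive (fun σ : Fin n → Bool => fun i => !σ i) := by
    intro σ; funext i; simp
  refine Fintype.sum_bijective _ hinv.bijective _ _ fun σ => ?_
  refine congrArg _ (funext fun f => Finset.sum_congr rfl fun i _ => ?_)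
  unfold sg
  cases h : σ i <;> simp [h] <;> ring

lemma rad_add (u v : α → Fin n → ℝ) {Cu Cv : ℝ}
    (hu : ∀ f i, |u f i| ≤ Cu) (hv : ∀ f i, |v f i| ≤ Cv) :
    Rad n (fun f i => u f i + v f i) ≤ Rad n u + Rad n v := by
  unfold Rad
  rw [← Finset.sum_add_distrib]
  refine Finset.sum_le_sum fun σ _ => ciSup_le fun f => ?_
  have e : ∑ i, sg σ i * (u f i + v f i)
      = (∑ i, sg σ i * u f i) + ∑ i, sg σ i * v f i := by
    rw [← Finset.sum_add_distrib]; exact Finset.sum_congr rfl fun i _ => by ring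
  rw [e]
  exact add_le_add (le_ciSup (bddS u hu σ) f) (le_ciSup (bddS v hv σ) f)

lemma rad_contraction (u : α → Fin n → ℝ) (φ : Fin n → ℝ → ℝ) {L Cu D : ℝ}
    (hL : 0 ≤ L) (hu : ∀ f i, |u f i| ≤ Cu)
    (hφb : ∀ f i, |φ i (u f i)| ≤ D)
    (hLip : ∀ i x y, |φ i x - φ i y| ≤ L * |x - y|) :
    Rad n (fun f i => φ i (u f i)) ≤ L * Rad n u := by
  set v : ℕ → α → Fin n → ℝ :=
    fun k f i => if (i : ℕ) < k then L * u f i else φ i (u f i) with hv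
  have hvb : ∀ k f i, |v k f i| ≤ max (L * Cu) D := by
    intro k f i
    by_cases h : (i : ℕ) < k <;> simp only [hv, h, if_true, if_false]
    · refine le_max_of_le_left ?_
      rw [abs_mul, abs_of_nonneg hL]
      exact mul_le_mul_of_nonneg_left (hu f i) hL
    · exact le_max_of_le_right (hφb f i)
  have main : ∀ k, k ≤ n → Rad n (v 0) ≤ Rad n (v k) := by
    intro k
    induction k with
    | zero => intro _; exact le_refl _
    | succ k ih =>
      intro hk
      have hkn : k < n := hk
      refine le_trans (ih (le_of_lt hkn)) ?_
      set j : Fin n := ⟨k, hkn⟩ with hj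
      have e1 : v k = fun f i => if i = j then φ j (u f j) else v k f i := by
        funext f i
        by_cases h : i = j
        · subst h; simp [hv, hj]
        · simp [h]
      have e2 : v (k + 1) = fun f i => if i = j then L * u f j else v k f i := by
        funext f i
        by_cases h : i = j
        · subst h; simp [hv, hj]
        · simp only [if_neg h, hv]
          have hik : (i : ℕ) ≠ k := by
            intro hh; exact h (Fin.ext (by simp [hj, hh]))
          have hiff : ((i : ℕ) < k + 1) = ((i : ℕ) < k) := by
            apply propext; omega
          simp only [hiff]
      calc Rad n (v k) = Rad n (fun f i => if i = j then φ j (u f j) else v k f i) := by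
            rw [← e1]
        _ ≤ Rad n (fun f i => if i = j then L * u f j else v k f i) :=
            rad_step j (v k) u (hvb k) hu (φ j) hL (hLip j)
        _ = Rad n (v (k + 1)) := by rw [← e2]
  have h0 : Rad n (fun f i => φ i (u f i)) = Rad n (v 0) := by
    refine congrArg _ (funext fun f => funext fun i => ?_)
    simp [hv]
  have hn2 : Rad n (v n) ≤ L * Rad n u := by
    have e : v n = fun f i => L * u f i := by
      funext f i; simp [hv, i.isLt]
    rw [e]
    exact rad_smul_le u hu hL
  rw [h0]
  exact le_trans (main n le_rfl) hn2

lemma rad_finsum {κ : Type*} [DecidableEq κ] (K : Finset κ) (u : κ → α → Fin n → ℝ) {C : ℝ}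
    (hu : ∀ k f i, |u k f i| ≤ C) :
    Rad n (fun f i => ∑ k ∈ K, u k f i) ≤ ∑ k ∈ K, Rad n (u k) := by
  classical
  induction K using Finset.induction_on with
  | empty => simp [Rad, ciSup_const]
  | @insert a s ha ih =>
    have hb : ∀ f i, |∑ k ∈ s, u k f i| ≤ (s.card : ℝ) * C := by
      intro f i
      calc |∑ k ∈ s, u k f i| ≤ ∑ k ∈ s, |u k f i| := Finset.abs_sum_le_sum_abs _ _
        _ ≤ ∑ _k ∈ s, C := Finset.sum_le_sum fun k _ => hu k f i
        _ = (s.card : ℝ) * C := by rw [Finset.sum_const, nsmul_eq_mul]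
    calc Rad n (fun f i => ∑ k ∈ insert a s, u k f i)
        = Rad n (fun f i => u a f i + ∑ k ∈ s, u k f i) := by
          refine congrArg _ (funext fun f => funext fun i => ?_)
          rw [Finset.sum_insert ha]
      _ ≤ Rad n (u a) + Rad n (fun f i => ∑ k ∈ s, u k f i) := rad_add _ _ (hu a) hb
      _ ≤ Rad n (u a) + ∑ k ∈ s, Rad n (u k) := by linarith [ih]
      _ = ∑ k ∈ insert a s, Rad n (u k) := by rw [Finset.sum_insert ha]

lemma abs_sub_le' (a b : ℝ) : |a - b| ≤ |a| + |b| := by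
  calc |a - b| = |a + -b| := by rw [sub_eq_add_neg]
    _ ≤ |a| + |-b| := abs_add_le _ _
    _ = |a| + |b| := by rw [abs_neg]

lemma rad_max2 (u v : α → Fin n → ℝ) {Cu Cv : ℝ}
    (hu : ∀ f i, |u f i| ≤ Cu) (hv : ∀ f i, |v f i| ≤ Cv) :
    Rad n (fun f i => max (u f i) (v f i)) ≤ Rad n u + Rad n v := by
  have hmax : ∀ x y : ℝ, max x y = 2⁻¹ * ((x + y) + |x - y|) := by
    intro x y
    rcases le_total x y with h | h
    · rw [max_eq_right h, abs_of_nonpos (by linarith)]; ring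
    · rw [max_eq_left h, abs_of_nonneg (by linarith)]; ring
  have hsub : ∀ f i, |u f i - v f i| ≤ Cu + Cv := fun f i =>
    (abs_sub_le' _ _).trans (add_le_add (hu f i) (hv f i))
  have habscl : ∀ f i, abs (abs (u f i - v f i)) ≤ Cu + Cv := by
    intro f i; rw [abs_abs]; exact hsub f i
  have haddb : ∀ f i, |u f i + v f i| ≤ Cu + Cv := fun f i =>
    (abs_add_le _ _).trans (add_le_add (hu f i) (hv f i))
  have e : (fun f i => max (u f i) (v f i))
      = fun f i => 2⁻¹ * ((u f i + v f i) + |u f i - v f i|) := by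
    funext f i; exact hmax _ _
  rw [e]
  have h2 : Rad n (fun f i => (u f i + v f i) + |u f i - v f i|)
      ≤ Rad n u + Rad n v + (Rad n u + Rad n v) := by
    have i1 : Rad n (fun f i => (u f i + v f i) + |u f i - v f i|)
        ≤ Rad n (fun f i => u f i + v f i) + Rad n (fun f i => |u f i - v f i|) :=
      rad_add _ _ haddb habscl
    have i2 : Rad n (fun f i => u f i + v f i) ≤ Rad n u + Rad n v := rad_add _ _ hu hv
    have i3 : Rad n (fun f i => |u f i - v f i|) ≤ Rad n (fun f i => u f i - v f i) := by
      have := rad_contraction (fun f i => u f i - v f i) (fun _ t => |t|)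
        (L := 1) (Cu := Cu + Cv) (D := Cu + Cv) zero_le_one hsub habscl
        (fun i x y => by rw [one_mul]; exact abs_abs_sub_abs_le_abs_sub x y)
      simpa using this
    have i4 : Rad n (fun f i => u f i - v f i) ≤ Rad n u + Rad n v := by
      have e2 : (fun f i => u f i - v f i) = fun f i => u f i + -(v f i) := by
        funext f i; ring
      rw [e2]
      have h5 := rad_add u (fun f i => -(v f i)) hu
        (fun f i => by rw [abs_neg]; exact hv f i)
      rwa [rad_neg v] at h5
    linarith
  have h3 : Rad n (fun f i => 2⁻¹ * ((u f i + v f i) + |u f i - v f i|))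
      ≤ 2⁻¹ * Rad n (fun f i => (u f i + v f i) + |u f i - v f i|) :=
    rad_smul_le _ (fun f i => (abs_add_le _ _).trans
      (add_le_add (haddb f i) (habscl f i))) (by norm_num)
  have h4 : 2⁻¹ * Rad n (fun f i => (u f i + v f i) + |u f i - v f i|)
      ≤ 2⁻¹ * (Rad n u + Rad n v + (Rad n u + Rad n v)) :=
    mul_le_mul_of_nonneg_left h2 (by norm_num)
  linarith

lemma rad_sup' {κ : Type*} (K : Finset κ) (hK : K.Nonempty) (u : κ → α → Fin n → ℝ) {C : ℝ}
    (hu : ∀ k f i, |u k f i| ≤ C) :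
    Rad n (fun f i => K.sup' hK fun k => u k f i) ≤ ∑ k ∈ K, Rad n (u k) := by
  classical
  induction hK using Finset.Nonempty.cons_induction with
  | singleton a => simp
  | cons a s h hs ih =>
    have hsb : ∀ f i, |s.sup' hs fun k => u k f i| ≤ C := by
      intro f i
      rw [abs_le]
      constructor
      · obtain ⟨k, hk⟩ := hs
        exact le_trans (abs_le.mp (hu k f i)).1 (Finset.le_sup' (fun k => u k f i) hk)
      · exact Finset.sup'_le _ _ fun k hk => (abs_le.mp (hu k f i)).2
    have e : (fun f i => (Finset.cons a s h).sup' (Finset.cons_nonempty h) fun k => u k f i)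
        = fun f i => max (u a f i) (s.sup' hs fun k => u k f i) := by
      funext f i
      rw [Finset.sup'_cons]
    rw [e]
    calc Rad n (fun f i => max (u a f i) (s.sup' hs fun k => u k f i))
        ≤ Rad n (u a) + Rad n (fun f i => s.sup' hs fun k => u k f i) :=
          rad_max2 _ _ (hu a) hsb
      _ ≤ Rad n (u a) + ∑ k ∈ s, Rad n (u k) := by linarith [ih]
      _ = ∑ k ∈ Finset.cons a s h, Rad n (u k) := by rw [Finset.sum_cons]

def ramp (γ t : ℝ) : ℝ := if t ≤ 0 then 1 else if γ < t then 0 else 1 - t / γ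

lemma ramp_abs_le_one {γ : ℝ} (hγ : 0 < γ) (t : ℝ) : |ramp γ t| ≤ 1 := by
  unfold ramp
  split_ifs with h1 h2
  · simp
  · simp
  · push_neg at h1 h2
    rw [abs_le]
    have ht1 : t / γ ≤ 1 := (div_le_one hγ).mpr h2
    have ht0 : 0 ≤ t / γ := div_nonneg (le_of_lt h1) (le_of_lt hγ)
    constructor <;> linarith

lemma ramp_eq {γ : ℝ} (hγ : 0 < γ) (t : ℝ) : ramp γ t = max 0 (min 1 (1 - t / γ)) := by
  unfold ramp
  split_ifs with h1 h2
  · have : (1:ℝ) ≤ 1 - t / γ := by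
      have : t / γ ≤ 0 := div_nonpos_of_nonpos_of_nonneg h1 (le_of_lt hγ)
      linarith
    rw [min_eq_left this, max_eq_right zero_le_one]
  · have : 1 - t / γ ≤ 0 := by
      have : (1:ℝ) < t / γ := (one_lt_div hγ).mpr h2
      linarith
    rw [min_eq_right (by linarith), max_eq_left this]
  · push_neg at h1 h2
    have ht1 : t / γ ≤ 1 := (div_le_one hγ).mpr h2
    have ht0 : 0 ≤ t / γ := div_nonneg (le_of_lt h1) (le_of_lt hγ)
    rw [min_eq_right (by linarith), max_eq_right (by linarith)]

lemma ramp_lip {γ : ℝ} (hγ : 0 < γ) (x y : ℝ) :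
    |ramp γ x - ramp γ y| ≤ (1 / γ) * |x - y| := by
  rw [ramp_eq hγ, ramp_eq hγ]
  have h1 : |max 0 (min 1 (1 - x / γ)) - max 0 (min 1 (1 - y / γ))|
      ≤ |min 1 (1 - x / γ) - min 1 (1 - y / γ)| := by
    rw [max_comm 0 (min 1 (1 - x / γ)), max_comm 0 (min 1 (1 - y / γ))]
    exact abs_max_sub_max_le_abs _ _ _
  have h2 : |min 1 (1 - x / γ) - min 1 (1 - y / γ)| ≤ |(1 - x / γ) - (1 - y / γ)| := by
    refine le_trans (abs_min_sub_min_le_max 1 (1 - x / γ) 1 (1 - y / γ)) ?_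
    simp
  have h3 : |(1 - x / γ) - (1 - y / γ)| = (1 / γ) * |x - y| := by
    have e : (1 - x / γ) - (1 - y / γ) = (y - x) / γ := by ring
    rw [e, abs_div, abs_of_pos hγ, abs_sub_comm]
    ring
  calc |max 0 (min 1 (1 - x / γ)) - max 0 (min 1 (1 - y / γ))|
      ≤ |(1 - x / γ) - (1 - y / γ)| := le_trans h1 h2
    _ = (1 / γ) * |x - y| := h3

end

end MMCD

open MMCD

/-- Multiclass margin class decomposition: for a class `F` of
functions `X → ℝ^c`, the empirical Rademacher complexity of the γ-margin loss
class is at most `(c/γ) Σ_y R̂_S(F_y)`, where `F_y = {x ↦ f(x)[y] : f ∈ F}`. -/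
theorem multiclass_margin_class_decomposition
    {X : Type*} {c n : ℕ} (hc : 1 < c) (hn : 0 < n)
    (F : Set (X → Fin c → ℝ)) (hF : F.Nonempty)
    (hbddA : ∀ x y, BddAbove ((fun f : X → Fin c → ℝ => f x y) '' F))
    (hbddB : ∀ x y, BddBelow ((fun f : X → Fin c → ℝ => f x y) '' F))
    (γ : ℝ) (hγ : 0 < γ)
    (xs : Fin n → X) (ys : Fin n → Fin c) :
    (∑ σ : Fin n → Bool,
        ⨆ f : F,
          (1 / (n : ℝ)) * ∑ i, (if σ i then (1 : ℝ) else -1) *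
            (let marg := f.1 (xs i) (ys i) -
                ⨆ y' : {y' : Fin c // y' ≠ ys i}, f.1 (xs i) y'.1
             if marg ≤ 0 then 1 else if γ < marg then 0 else 1 - marg / γ))
        / 2 ^ n
      ≤ ((c : ℝ) / γ) *
          ∑ y : Fin c,
            (∑ σ : Fin n → Bool,
                ⨆ f : F,
                  (1 / (n : ℝ)) * ∑ i, (if σ i then (1 : ℝ) else -1) * f.1 (xs i) y)
              / 2 ^ n := by
  classical
  have hc0 : 0 < c := by omega
  haveI : Nonempty ↥F := hF.to_subtype
  haveI hne : ∀ i : Fin n, Nonempty {y' : Fin c // y' ≠ ys i} := by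
    intro i
    obtain ⟨y', hy'⟩ := Fintype.exists_ne_of_one_lt_card (by simpa using hc) (ys i)
    exact ⟨⟨y', hy'⟩⟩
  -- global bound
  set M : Fin n → Fin c → ℝ :=
    fun i y => sSup ((fun f : X → Fin c → ℝ => f (xs i) y) '' F) with hM
  set m : Fin n → Fin c → ℝ :=
    fun i y => sInf ((fun f : X → Fin c → ℝ => f (xs i) y) '' F) with hm
  set B : ℝ := ∑ i : Fin n, ∑ y : Fin c, (|M i y| + |m i y|) with hBdef
  have hB : ∀ (f : ↥F) (i : Fin n) (y : Fin c), |f.1 (xs i) y| ≤ B := by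
    intro f i y
    have h1 : f.1 (xs i) y ≤ M i y := le_csSup (hbddA (xs i) y) ⟨f.1, f.2, rfl⟩
    have h2 : m i y ≤ f.1 (xs i) y := csInf_le (hbddB (xs i) y) ⟨f.1, f.2, rfl⟩
    have h3a : |M i y| + |m i y| ≤ ∑ y' : Fin c, (|M i y'| + |m i y'|) :=
      Finset.single_le_sum (f := fun y' => |M i y'| + |m i y'|)
        (fun y' _ => by positivity) (Finset.mem_univ y)
    have h3b : ∑ y' : Fin c, (|M i y'| + |m i y'|) ≤ B :=
      Finset.single_le_sum (f := fun i' => ∑ y' : Fin c, (|M i' y'| + |m i' y'|))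
        (fun i' _ => by positivity) (Finset.mem_univ i)
    rw [abs_le]
    constructor
    · linarith [neg_abs_le (m i y), abs_nonneg (M i y)]
    · linarith [le_abs_self (M i y), abs_nonneg (m i y)]
  -- classes
  have hmpb : ∀ (f : ↥F) (i : Fin n),
      |⨆ y' : {y' : Fin c // y' ≠ ys i}, f.1 (xs i) y'.1| ≤ B := by
    intro f i
    rw [abs_le]
    constructor
    · obtain ⟨y'⟩ := hne i
      refine le_trans ?_ (le_ciSup (Set.Finite.bddAbove (Set.finite_range _)) y')
      linarith [(abs_le.mp (hB f i y'.1)).1]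
    · exact ciSup_le fun y' => (abs_le.mp (hB f i y'.1)).2
  have hmargb : ∀ (f : ↥F) (i : Fin n),
      |f.1 (xs i) (ys i) - ⨆ y' : {y' : Fin c // y' ≠ ys i}, f.1 (xs i) y'.1| ≤ B + B :=
    fun f i => (abs_sub_le' _ _).trans (add_le_add (hB f i (ys i)) (hmpb f i))
  -- step 1 : contraction with the ramp
  have step1 : Rad n (fun (f : ↥F) i => ramp γ
        (f.1 (xs i) (ys i) - ⨆ y' : {y' : Fin c // y' ≠ ys i}, f.1 (xs i) y'.1))
      ≤ (1 / γ) * Rad n (fun (f : ↥F) i =>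
        f.1 (xs i) (ys i) - ⨆ y' : {y' : Fin c // y' ≠ ys i}, f.1 (xs i) y'.1) := by
    refine rad_contraction _ (fun _ t => ramp γ t) (by positivity) hmargb
      (D := 1) (fun f i => ramp_abs_le_one hγ _) (fun i x y => ramp_lip hγ x y)
  -- step 2 : split the difference
  have step2 : Rad n (fun (f : ↥F) i =>
        f.1 (xs i) (ys i) - ⨆ y' : {y' : Fin c // y' ≠ ys i}, f.1 (xs i) y'.1)
      ≤ Rad n (fun (f : ↥F) i => f.1 (xs i) (ys i))
        + Rad n (fun (f : ↥F) i => ⨆ y' : {y' : Fin c // y' ≠ ys i}, f.1 (xs i) y'.1) := by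
    have e2 : (fun (f : ↥F) i =>
        f.1 (xs i) (ys i) - ⨆ y' : {y' : Fin c // y' ≠ ys i}, f.1 (xs i) y'.1)
        = fun (f : ↥F) i => f.1 (xs i) (ys i)
          + -(⨆ y' : {y' : Fin c // y' ≠ ys i}, f.1 (xs i) y'.1) := by
      funext f i; ring
    rw [e2]
    have h5 := rad_add (fun (f : ↥F) i => f.1 (xs i) (ys i))
      (fun (f : ↥F) i => -(⨆ y' : {y' : Fin c // y' ≠ ys i}, f.1 (xs i) y'.1))
      (fun f i => hB f i (ys i)) (fun f i => by rw [abs_neg]; exact hmpb f i)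
    rwa [rad_neg] at h5
  -- step 3 : diagonal class
  have maskstep : ∀ (t : Fin n → Fin c) (y : Fin c),
      Rad n (fun (f : ↥F) i => if t i = y then f.1 (xs i) y else 0)
        ≤ Rad n (fun (f : ↥F) i => f.1 (xs i) y) := by
    intro t y
    have := rad_contraction (α := ↥F) (fun f i => f.1 (xs i) y)
      (fun i s => if t i = y then s else 0) (L := 1) (D := B) zero_le_one
      (fun f i => hB f i y)
      (fun f i => by
        beta_reduce
        split_ifs with h
        · exact hB f i y
        · simpa using le_trans (abs_nonneg _) (hB f i y))
      (fun i x x' => by beta_reduce; split_ifs with h <;> simp)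
    simpa using this
  have step3 : Rad n (fun (f : ↥F) i => f.1 (xs i) (ys i))
      ≤ ∑ y : Fin c, Rad n (fun (f : ↥F) i => f.1 (xs i) y) := by
    have e3 : (fun (f : ↥F) i => f.1 (xs i) (ys i))
        = fun (f : ↥F) i => ∑ y : Fin c, (if ys i = y then f.1 (xs i) y else 0) := by
      funext f i
      rw [Finset.sum_ite_eq]
      simp
    rw [e3]
    refine le_trans (rad_finsum Finset.univ
      (fun y (f : ↥F) i => if ys i = y then f.1 (xs i) y else 0) (C := B) ?_) ?_
    · intro y f i
      beta_reduce
      split_ifs with h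
      · exact hB f i y
      · simpa using le_trans (abs_nonneg _) (hB f i y)
    · exact Finset.sum_le_sum fun y _ => maskstep ys y
  -- step 4 : the max part
  have c1pos : 0 < c - 1 := by omega
  haveI : Nonempty (Fin (c - 1)) := ⟨⟨0, c1pos⟩⟩
  set τ : Fin n → Fin (c - 1) → Fin c := fun i k =>
    if (⟨k.1 + 1, by have := k.isLt; omega⟩ : Fin c) = ys i
    then (⟨0, hc0⟩ : Fin c) else ⟨k.1 + 1, by have := k.isLt; omega⟩ with hτ
  have hτne : ∀ i k, τ i k ≠ ys i := by
    intro i k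
    simp only [hτ]
    split_ifs with h
    · intro h0
      rw [← h0] at h
      have hval := congrArg Fin.val h
      simp at hval
    · exact h
  have hmp_eq : ∀ (f : ↥F) (i : Fin n),
      (⨆ y' : {y' : Fin c // y' ≠ ys i}, f.1 (xs i) y'.1)
        = Finset.univ.sup' (Finset.univ_nonempty (α := Fin (c - 1)))
            (fun k => f.1 (xs i) (τ i k)) := by
    intro f i
    apply le_antisymm
    · refine ciSup_le fun y' => ?_
      have : ∃ k, τ i k = y'.1 := by
        by_cases hy0 : (y'.1 : ℕ) = 0
        · have hys : (ys i : ℕ) ≠ 0 := by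
            intro h0
            exact y'.2 (Fin.ext (by omega))
          refine ⟨⟨(ys i : ℕ) - 1, by have := (ys i).isLt; omega⟩, ?_⟩
          simp only [hτ]
          rw [if_pos (Fin.ext (by simp; omega))]
          exact Fin.ext (by simp; omega)
        · refine ⟨⟨(y'.1 : ℕ) - 1, by have := y'.1.isLt; omega⟩, ?_⟩
          simp only [hτ]
          rw [if_neg ?_]
          · exact Fin.ext (by simp; omega)
          · intro h
            have hval := congrArg Fin.val h
            simp at hval
            exact y'.2 (Fin.ext (by omega))
      obtain ⟨k, hk⟩ := this
      calc f.1 (xs i) y'.1 = f.1 (xs i) (τ i k) := by rw [hk]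
        _ ≤ _ := Finset.le_sup' (fun k => f.1 (xs i) (τ i k)) (Finset.mem_univ k)
    · refine Finset.sup'_le _ _ fun k _ => ?_
      exact le_ciSup (Set.Finite.bddAbove (Set.finite_range
        (fun y' : {y' : Fin c // y' ≠ ys i} => f.1 (xs i) y'.1))) ⟨τ i k, hτne i k⟩
  have step4 : Rad n (fun (f : ↥F) i => ⨆ y' : {y' : Fin c // y' ≠ ys i}, f.1 (xs i) y'.1)
      ≤ ((c : ℝ) - 1) * ∑ y : Fin c, Rad n (fun (f : ↥F) i => f.1 (xs i) y) := by
    have e4 : (fun (f : ↥F) i => ⨆ y' : {y' : Fin c // y' ≠ ys i}, f.1 (xs i) y'.1)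
        = fun (f : ↥F) i => Finset.univ.sup' (Finset.univ_nonempty (α := Fin (c - 1)))
            (fun k => f.1 (xs i) (τ i k)) := by
      funext f i; exact hmp_eq f i
    rw [e4]
    have h6 : Rad n (fun (f : ↥F) i => Finset.univ.sup'
          (Finset.univ_nonempty (α := Fin (c - 1))) (fun k => f.1 (xs i) (τ i k)))
        ≤ ∑ k : Fin (c - 1), Rad n (fun (f : ↥F) i => f.1 (xs i) (τ i k)) :=
      rad_sup' Finset.univ _ (fun k (f : ↥F) i => f.1 (xs i) (τ i k)) (C := B)
        (fun k f i => hB f i (τ i k))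
    have h7 : ∀ k : Fin (c - 1), Rad n (fun (f : ↥F) i => f.1 (xs i) (τ i k))
        ≤ ∑ y : Fin c, Rad n (fun (f : ↥F) i => f.1 (xs i) y) := by
      intro k
      have e5 : (fun (f : ↥F) i => f.1 (xs i) (τ i k))
          = fun (f : ↥F) i => ∑ y : Fin c, (if τ i k = y then f.1 (xs i) y else 0) := by
        funext f i
        rw [Finset.sum_ite_eq]
        simp
      rw [e5]
      refine le_trans (rad_finsum Finset.univ
        (fun y (f : ↥F) i => if τ i k = y then f.1 (xs i) y else 0) (C := B) ?_) ?_
      · intro y f i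
        beta_reduce
        split_ifs with h
        · exact hB f i y
        · simpa using le_trans (abs_nonneg _) (hB f i y)
      · exact Finset.sum_le_sum fun y _ => maskstep (fun i => τ i k) y
    calc Rad n (fun (f : ↥F) i => Finset.univ.sup'
          (Finset.univ_nonempty (α := Fin (c - 1))) (fun k => f.1 (xs i) (τ i k)))
        ≤ ∑ k : Fin (c - 1), Rad n (fun (f : ↥F) i => f.1 (xs i) (τ i k)) := h6
      _ ≤ ∑ _k : Fin (c - 1), ∑ y : Fin c, Rad n (fun (f : ↥F) i => f.1 (xs i) y) :=
          Finset.sum_le_sum fun k _ => h7 k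
      _ = ((c : ℝ) - 1) * ∑ y : Fin c, Rad n (fun (f : ↥F) i => f.1 (xs i) y) := by
          rw [Finset.sum_const, Finset.card_univ, Fintype.card_fin, nsmul_eq_mul]
          congr 1
          have : (1 : ℕ) ≤ c := by omega
          push_cast [Nat.cast_sub this]
          ring
  -- combine
  have key : Rad n (fun (f : ↥F) i => ramp γ
        (f.1 (xs i) (ys i) - ⨆ y' : {y' : Fin c // y' ≠ ys i}, f.1 (xs i) y'.1))
      ≤ ((c : ℝ) / γ) * ∑ y : Fin c, Rad n (fun (f : ↥F) i => f.1 (xs i) y) := by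
    set S : ℝ := ∑ y : Fin c, Rad n (fun (f : ↥F) i => f.1 (xs i) y) with hS
    have h8 : Rad n (fun (f : ↥F) i =>
        f.1 (xs i) (ys i) - ⨆ y' : {y' : Fin c // y' ≠ ys i}, f.1 (xs i) y'.1)
        ≤ (c : ℝ) * S := by
      have he : S + ((c : ℝ) - 1) * S = (c : ℝ) * S := by ring
      linarith [step2, step3, step4]
    calc Rad n (fun (f : ↥F) i => ramp γ
          (f.1 (xs i) (ys i) - ⨆ y' : {y' : Fin c // y' ≠ ys i}, f.1 (xs i) y'.1))
        ≤ (1 / γ) * Rad n (fun (f : ↥F) i =>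
          f.1 (xs i) (ys i) - ⨆ y' : {y' : Fin c // y' ≠ ys i}, f.1 (xs i) y'.1) := step1
      _ ≤ (1 / γ) * ((c : ℝ) * S) := mul_le_mul_of_nonneg_left h8 (by positivity)
      _ = ((c : ℝ) / γ) * S := by ring
  -- rewrite the goal
  have hn0 : (0 : ℝ) ≤ 1 / (n : ℝ) := by positivity
  have pull : ∀ T : (Fin n → Bool) → ℝ,
      (∑ σ : Fin n → Bool, (1 / (n : ℝ)) * T σ) / 2 ^ n
        = 1 / (n : ℝ) / 2 ^ n * ∑ σ : Fin n → Bool, T σ := by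
    intro T
    rw [Finset.mul_sum, Finset.sum_div]
    exact Finset.sum_congr rfl fun σ _ => by ring
  simp only [← Real.mul_iSup_of_nonneg hn0]
  simp_rw [pull]
  rw [← Finset.mul_sum, mul_left_comm]
  refine mul_le_mul_of_nonneg_left ?_ (by positivity)
  exact key
end
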